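/- arXiv:1803.11463 — 12 statements merged into one kernel-verified Lean document; each statement's English description precedes it below -/
import Mathlib

section
/- Let $n \geq 0$, let $p \geq 1$ be an integer, and set $a_i = p\,i$ for $0 \leq i \leq n$. Then the determinant of the $(n+1)\times(n+1)$ matrix with entries $\binom{p\,i + j}{j}$ equals $p^{n(n+1)/2}$. -/
open Polynomial Finset

private lemma asc_cast (m : ℕ) : ∀ j : ℕ,
    ((m+1).ascFactorial j : ℚ) = ∏ t ∈ range j, ((m : ℚ) + t + 1)
  | 0 => by simp
  | (k+1) => by
    rw [Nat.ascFactorial_succ, prod_range_succ, ← asc_cast m k]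
    push_cast; ring

private lemma fact_mul_choose' (j m : ℕ) :
    ((Nat.factorial j : ℚ)) * ((m + j).choose j : ℚ) = ∏ t ∈ range j, ((m : ℚ) + t + 1) := by
  rw [← asc_cast m j, Nat.ascFactorial_eq_factorial_mul_choose]
  push_cast; ring

private noncomputable def Qpoly (p j : ℕ) : ℚ[X] :=
  C ((Nat.factorial j : ℚ)⁻¹) * ∏ t ∈ range j, (C (p : ℚ) * X + C ((t : ℚ) + 1))

private lemma Qpoly_eval (p j i : ℕ) :
    (Qpoly p j).eval (i : ℚ) = ((p * i + j).choose j : ℚ) := by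
  have hf : ((Nat.factorial j : ℚ)) ≠ 0 := by exact_mod_cast (Nat.factorial_pos j).ne'
  have key := fact_mul_choose' j (p * i)
  have hpr : (∏ t ∈ range j, ((p:ℚ) * i + ((t:ℚ) + 1)))
      = ∏ t ∈ range j, (((p * i : ℕ) : ℚ) + t + 1) := by
    refine Finset.prod_congr rfl fun t _ => ?_
    push_cast; ring
  rw [Qpoly]
  simp only [eval_mul, eval_C, eval_prod, eval_add, eval_X]
  rw [hpr, ← key]
  field_simp

private lemma Qpoly_natDegree_le (p j : ℕ) : (Qpoly p j).natDegree ≤ j := by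
  rw [Qpoly]
  refine le_trans (natDegree_mul_le) ?_
  simp only [natDegree_C, zero_add]
  refine le_trans (natDegree_prod_le _ _) ?_
  refine le_trans (Finset.sum_le_sum fun t _ =>
    (natDegree_linear_le : (C (p:ℚ) * X + C ((t:ℚ)+1)).natDegree ≤ 1)) ?_
  simp

private lemma Qpoly_coeff_diag (p j : ℕ) (hp : 1 ≤ p) :
    (Qpoly p j).coeff j = (p : ℚ) ^ j * ((Nat.factorial j : ℚ))⁻¹ := by
  have hp0 : (p : ℚ) ≠ 0 := by positivity
  have hne : ∀ t ∈ range j, (C (p:ℚ) * X + C ((t:ℚ)+1)) ≠ 0 := by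
    intro t _ h0
    have := natDegree_linear (b := ((t:ℚ)+1)) hp0
    rw [h0] at this
    simp at this
  have hProdDeg : (∏ t ∈ range j, (C (p:ℚ) * X + C ((t:ℚ)+1))).natDegree = j := by
    have h : ∑ t ∈ range j, (C (p:ℚ) * X + C ((t:ℚ)+1)).natDegree = ∑ _t ∈ range j, 1 :=
      Finset.sum_congr rfl fun t _ => natDegree_linear hp0
    rw [natDegree_prod _ _ hne, h]
    simp
  have hlead : (∏ t ∈ range j, (C (p:ℚ) * X + C ((t:ℚ)+1))).leadingCoeff = (p:ℚ)^j := by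
    have h : ∏ t ∈ range j, (C (p:ℚ) * X + C ((t:ℚ)+1)).leadingCoeff
        = ∏ _t ∈ range j, (p:ℚ) :=
      Finset.prod_congr rfl fun t _ => leadingCoeff_linear hp0
    rw [leadingCoeff_prod, h]
    simp
  have hc : (∏ t ∈ range j, (C (p:ℚ) * X + C ((t:ℚ)+1))).coeff j = (p:ℚ)^j := by
    revert hProdDeg hlead
    generalize (∏ t ∈ range j, (C (p:ℚ) * X + C ((t:ℚ)+1))) = P
    intro hProdDeg hlead
    conv_lhs => rw [← hProdDeg]
    exact hlead
  rw [Qpoly, coeff_C_mul, hc, mul_comm]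

/-- For `a i = p * i`, the LGV determinant equals `p ^ (n(n+1)/2)`. -/
theorem stmt_1 (n p : ℕ) (hp : 1 ≤ p) :
    (Matrix.of fun i j : Fin (n+1) => (((p * (i : ℕ) + (j : ℕ)).choose (j : ℕ) : ℤ))).det =
      (p : ℤ) ^ (n * (n+1) / 2) := by
  set MQ : Matrix (Fin (n+1)) (Fin (n+1)) ℚ :=
    Matrix.of fun i j : Fin (n+1) => (((p * (i : ℕ) + (j : ℕ)).choose (j : ℕ) : ℚ)) with hMQ
  have hdetQ : MQ.det = (p : ℚ) ^ (n * (n+1) / 2) := by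
    have hfac : MQ = Matrix.of (fun i j : Fin (n+1) =>
        (Qpoly p (j:ℕ)).eval (((i:ℕ) : ℚ))) := by
      ext i j
      simp only [hMQ, Matrix.of_apply]
      exact (Qpoly_eval p j i).symm
    rw [hfac, Matrix.eval_matrixOfPolynomials_eq_vandermonde_mul_matrixOfPolynomials
      (fun i : Fin (n+1) => ((i:ℕ) : ℚ)) (fun j => Qpoly p (j:ℕ))
      (fun j => Qpoly_natDegree_le p j), Matrix.det_mul]
    have hvdm : (Matrix.vandermonde (fun i : Fin (n+1) => ((i:ℕ) : ℚ))).det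
        = (Nat.superFactorial n : ℚ) := Matrix.det_vandermonde_id_eq_superFactorial n
    have htri : (Matrix.of fun i j : Fin (n+1) => (Qpoly p (j:ℕ)).coeff (i:ℕ)).det
        = ∏ j : Fin (n+1), ((p:ℚ)^(j:ℕ) * ((Nat.factorial (j:ℕ) : ℚ))⁻¹) := by
      rw [Matrix.det_of_upperTriangular]
      · exact Finset.prod_congr rfl fun j _ => Qpoly_coeff_diag p (j:ℕ) hp
      · intro i j hij
        exact Polynomial.coeff_eq_zero_of_natDegree_lt
          (lt_of_le_of_lt (Qpoly_natDegree_le p (j:ℕ)) (by exact_mod_cast hij))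
    rw [hvdm, htri, Finset.prod_mul_distrib]
    have hsf : (Nat.superFactorial n : ℚ) = ∏ j : Fin (n+1), ((Nat.factorial (j:ℕ) : ℚ)) := by
      rw [Fin.prod_univ_eq_prod_range (fun j : ℕ => ((Nat.factorial j : ℚ)))]
      rw [← Nat.cast_prod, Nat.prod_range_succ_factorial]
    have hfne : ∀ j : Fin (n+1), ((Nat.factorial (j:ℕ) : ℚ)) ≠ 0 :=
      fun j => by exact_mod_cast (Nat.factorial_pos _).ne'
    rw [hsf, mul_comm, mul_assoc, ← Finset.prod_mul_distrib]
    have h1 : ∏ j : Fin (n+1), (((Nat.factorial (j:ℕ) : ℚ))⁻¹ * ((Nat.factorial (j:ℕ) : ℚ)))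
        = 1 := by
      rw [Finset.prod_congr rfl fun j _ => inv_mul_cancel₀ (hfne j)]
      simp
    rw [h1, mul_one, Finset.prod_pow_eq_pow_sum]
    congr 1
    rw [Fin.sum_univ_eq_sum_range (fun j => j), Finset.sum_range_id]
    simp [Nat.mul_comm]
  have hcast : (((Matrix.of fun i j : Fin (n+1) =>
      (((p * (i : ℕ) + (j : ℕ)).choose (j : ℕ) : ℤ))).det : ℤ) : ℚ) = MQ.det := by
    have h := (Int.castRingHom ℚ).map_det
      (Matrix.of fun i j : Fin (n+1) => (((p * (i : ℕ) + (j : ℕ)).choose (j : ℕ) : ℤ)))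
    simp only [eq_intCast] at h
    rw [h]
    refine congrArg Matrix.det ?_
    ext i j
    simp [hMQ, Matrix.map_apply]
  have := hdetQ ▸ hcast
  exact_mod_cast this
end

section
/- Let $0 = a_0 < a_1 < \cdots < a_n$ be strictly increasing integers. Define the lower triangular $(n+1)\times(n+1)$ matrix $M$ by $M_{i,j} = \prod_{s=0}^{i-1}(a_i - a_s) / \prod_{s=0, s \neq j}^{i}(a_j - a_s)$ for $i \geq j$ and $M_{i,j} = 0$ for $i < j$. Then $M$ is lower uni-triangular (i.e. $M_{i,i} = 1$ for all $i$), and the product $U = M A$, where $A_{i,j} = \binom{a_i+j}{j}$, is upper triangular with diagonal entries $U_{i,i} = \frac{1}{i!}\prod_{s=0}^{i-1}(a_i - a_s)$. -/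
open Polynomial Finset

lemma dd_sum {F : Type*} [Field F] {ι : Type*} [DecidableEq ι] (s : Finset ι)
    (v : ι → F) (hvs : Set.InjOn v s) (p : F[X]) (hp : p.degree < s.card) :
    (∑ i ∈ s, p.eval (v i) * Lagrange.nodalWeight s v i) = p.coeff (s.card - 1) := by
  conv_rhs => rw [Lagrange.eq_interpolate hvs hp]
  rw [Lagrange.interpolate_apply, finset_sum_coeff]
  refine Finset.sum_congr rfl fun i hi => ?_
  rw [coeff_C_mul, Lagrange.basis_eq_prod_sub_inv_mul_nodal_div hi,
    ← Lagrange.nodal_erase_eq_nodal_div hi, coeff_C_mul]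
  have hcard : (s.erase i).card = s.card - 1 := Finset.card_erase_of_mem hi
  have hdeg : (Lagrange.nodal (s.erase i) v).natDegree = s.card - 1 := by
    rw [Lagrange.natDegree_nodal, hcard]
  have : (Lagrange.nodal (s.erase i) v).coeff (s.card - 1) = 1 := by
    rw [← hdeg]; exact Lagrange.nodal_monic.coeff_natDegree
  rw [this]; ring

noncomputable def binPoly (j : ℕ) : ℚ[X] :=
  Polynomial.C ((j.factorial : ℚ)⁻¹) * ((ascPochhammer ℚ j).comp (X + 1))

lemma binPoly_eval (j m : ℕ) : (binPoly j).eval (m : ℚ) = ((m + j).choose j : ℚ) := by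
  have h1 : ((ascPochhammer ℚ j).comp (X + 1)).eval (m : ℚ)
      = (((ascPochhammer ℕ j).eval (m + 1) : ℕ) : ℚ) := by
    rw [eval_comp, eval_add, eval_X, eval_one, ascPochhammer_eval_cast, Nat.cast_add,
      Nat.cast_one]
  rw [binPoly, eval_mul, eval_C, h1, ascPochhammer_nat_eq_ascFactorial,
    Nat.ascFactorial_eq_factorial_mul_choose, Nat.cast_mul]
  rw [← mul_assoc, inv_mul_cancel₀ (by exact_mod_cast j.factorial_ne_zero), one_mul]

lemma binPoly_natDegree (j : ℕ) : (binPoly j).natDegree = j := by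
  rw [binPoly, natDegree_C_mul (by exact inv_ne_zero (by exact_mod_cast j.factorial_ne_zero)),
    natDegree_comp, ascPochhammer_natDegree,
    show ((X:ℚ[X]) + 1) = X + C 1 by simp, natDegree_X_add_C, mul_one]

lemma binPoly_coeff (j : ℕ) : (binPoly j).coeff j = (j.factorial : ℚ)⁻¹ := by
  have hm : (((ascPochhammer ℚ j).comp (X + 1))).Monic := by
    have := (monic_ascPochhammer ℚ (n := j)).comp_X_add_C 1
    simpa [map_one] using this
  have hd : ((ascPochhammer ℚ j).comp (X + 1)).natDegree = j := by
    rw [natDegree_comp, ascPochhammer_natDegree,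
      show ((X:ℚ[X]) + 1) = X + C 1 by simp, natDegree_X_add_C, mul_one]
  have := hm.coeff_natDegree
  rw [hd] at this
  rw [binPoly, coeff_C_mul, this, mul_one]

/-- Explicit LU decomposition of the LGV matrix `A i j = (a i + j).choose j`:
the explicit lower uni-triangular matrix `M` satisfies that `M * A` is upper
triangular with diagonal entries `(1/i!) * ∏_{s<i} (a i - a s)`. -/
theorem stmt_2 (n : ℕ) (a : Fin (n+1) → ℕ) (h0 : a 0 = 0) (ha : StrictMono a) :
    let M : Matrix (Fin (n+1)) (Fin (n+1)) ℚ := Matrix.of fun i j =>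
      if j ≤ i then
        (∏ s ∈ Finset.Iio i, ((a i : ℚ) - a s)) /
        (∏ s ∈ Finset.Iic i \ {j}, ((a j : ℚ) - a s))
      else 0
    let A : Matrix (Fin (n+1)) (Fin (n+1)) ℚ :=
      Matrix.of fun i j => ((a i + (j : ℕ)).choose (j : ℕ) : ℚ)
    (∀ i, M i i = 1) ∧
    (∀ i j, j < i → (M * A) i j = 0) ∧
    (∀ i, (M * A) i i =
      (1 / (Nat.factorial (i : ℕ) : ℚ)) * ∏ s ∈ Finset.Iio i, ((a i : ℚ) - a s)) := by
  intro M A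
  have hane : ∀ i k : Fin (n+1), k ≠ i → ((a i : ℚ) - a k) ≠ 0 := by
    intro i k hk
    have : a k ≠ a i := fun h => hk (ha.injective h)
    exact sub_ne_zero_of_ne (by exact_mod_cast this.symm)
  have key : ∀ i j : Fin (n+1), (j:ℕ) ≤ (i:ℕ) →
      (M * A) i j = (∏ s ∈ Finset.Iio i, ((a i : ℚ) - a s)) * (binPoly (j:ℕ)).coeff (i:ℕ) := by
    intro i j hij
    have hv : Set.InjOn (fun t : Fin (n+1) => (a t : ℚ)) ↑(Finset.Iic i) :=
      fun x _ y _ h => ha.injective (Nat.cast_injective (R := ℚ) (by simpa using h))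
    have hdeg : (binPoly (j:ℕ)).degree < (Finset.Iic i).card := by
      rw [Fin.card_Iic]
      refine lt_of_le_of_lt degree_le_natDegree ?_
      rw [binPoly_natDegree]
      exact_mod_cast Nat.lt_succ_of_le hij
    rw [Matrix.mul_apply]
    rw [← Finset.sum_subset (Finset.subset_univ (Finset.Iic i)) (fun k _ hk => by
        simp only [M, Matrix.of_apply]
        rw [if_neg (by simpa using hk), zero_mul])]
    have hdd := dd_sum (Finset.Iic i) (fun t : Fin (n+1) => (a t : ℚ)) hv (binPoly (j:ℕ)) hdeg
    rw [Fin.card_Iic, Nat.add_sub_cancel] at hdd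
    rw [← hdd, Finset.mul_sum]
    refine Finset.sum_congr rfl fun k hk => ?_
    simp only [M, A, Matrix.of_apply]
    rw [if_pos (Finset.mem_Iic.mp hk), ← binPoly_eval, ← Finset.erase_eq,
      Lagrange.nodalWeight, div_eq_mul_inv, ← Finset.prod_inv_distrib]
    ring
  refine ⟨?_, ?_, ?_⟩
  · intro i
    simp only [M, Matrix.of_apply, if_pos le_rfl]
    rw [← Finset.erase_eq, Finset.Iic_erase]
    exact div_self (Finset.prod_ne_zero_iff.mpr fun k hk =>
      hane i k (ne_of_lt (Finset.mem_Iio.mp hk)))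
  · intro i j hji
    rw [key i j (le_of_lt hji)]
    rw [coeff_eq_zero_of_natDegree_lt (by rw [binPoly_natDegree]; exact_mod_cast hji), mul_zero]
  · intro i
    rw [key i i le_rfl, binPoly_coeff, one_div, mul_comm]
end

section
/- Let $0 = a_0 < a_1 < \cdots < a_n$ be strictly increasing integers with $a_n = n + m$, and let $b_1 < b_2 < \cdots < b_m$ be the complementary increasing sequence, i.e. $\{a_0,\dots,a_n\} \sqcup \{b_1,\dots,b_m\} = \{0,1,\dots,n+m\}$. Set $\tilde a_i = a_n - a_{n-i}$ for $0 \leq i \leq n$. Then the following three determinants are all equal to $\Delta(a_0,\dots,a_n)/\Delta(0,1,\dots,n)$: (i) $\det\left(\binom{a_i+j}{j}\right)_{0\leq i,j\leq n}$, (ii) $\det\left(\binom{\tilde a_i}{j}\right)_{0\leq i,j\leq n}$, (iii) $\det\left(\binom{n+1}{b_i - j + 1}\right)_{1\leq i,j\leq m}$. -/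
open Finset Polynomial Matrix

lemma helper_prod_rev {N : ℕ} (F : Fin N → Fin N → ℚ) :
    ∏ i : Fin N, ∏ j ∈ Finset.Ioi i, F i j
      = ∏ i : Fin N, ∏ j ∈ Finset.Ioi i, F j.rev i.rev := by
  rw [Finset.prod_sigma', Finset.prod_sigma']
  refine Finset.prod_nbij' (fun p => ⟨p.2.rev, p.1.rev⟩) (fun p => ⟨p.2.rev, p.1.rev⟩)
    ?_ ?_ ?_ ?_ ?_ <;> intro p hp <;>
    simp only [Finset.mem_sigma, Finset.mem_univ, Finset.mem_Ioi, true_and] at *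
  · exact Fin.rev_lt_rev.mpr hp
  · exact Fin.rev_lt_rev.mpr hp
  · simp [Fin.rev_rev]
  · simp [Fin.rev_rev]
  · simp [Fin.rev_rev]

lemma helper_prod_swap {N : ℕ} (F : Fin N → Fin N → ℚ) :
    ∏ i : Fin N, ∏ j ∈ Finset.Iio i, F i j
      = ∏ i : Fin N, ∏ j ∈ Finset.Ioi i, F j i := by
  rw [Finset.prod_sigma', Finset.prod_sigma']
  refine Finset.prod_nbij' (fun p => ⟨p.2, p.1⟩) (fun p => ⟨p.2, p.1⟩)
    ?_ ?_ ?_ ?_ ?_ <;> intro p hp <;>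
    simp only [Finset.mem_sigma, Finset.mem_univ, Finset.mem_Ioi, Finset.mem_Iio, true_and] at *
  all_goals first | exact hp | rfl

lemma helper_cast_descFactorial (c k : ℕ) :
    ((c.descFactorial k : ℕ) : ℚ) = ∏ t ∈ Finset.range k, ((c : ℚ) - t) := by
  induction k with
  | zero => simp
  | succ k ih =>
    rw [Nat.descFactorial_succ, Finset.prod_range_succ, ← ih]
    rcases le_or_gt (k+1) c with h | h
    · push_cast [Nat.cast_sub (le_trans (Nat.le_succ k) h)]
      ring
    · rcases Nat.lt_succ_iff_lt_or_eq.mp h with h' | h'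
      · rw [Nat.descFactorial_eq_zero_iff_lt.mpr h']
        simp
      · subst h'
        simp

lemma helper_erase_range (N x : ℕ) (hx : x ≤ N) :
    ∏ y ∈ (Finset.range (N+1)).erase x, |(x : ℚ) - y| = ((Nat.factorial x : ℕ) : ℚ) * ((Nat.factorial (N - x) : ℕ) : ℚ) := by
  have hsplit : (Finset.range (N+1)).erase x = Finset.range x ∪ Finset.Ico (x+1) (N+1) := by
    ext y
    simp only [Finset.mem_erase, Finset.mem_range, Finset.mem_union, Finset.mem_Ico]
    omega
  have hdisj : Disjoint (Finset.range x) (Finset.Ico (x+1) (N+1)) := by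
    simp only [Finset.disjoint_left, Finset.mem_range, Finset.mem_Ico]
    omega
  rw [hsplit, Finset.prod_union hdisj]
  congr 1
  · have h1 : ∀ y ∈ Finset.range x, |(x:ℚ) - y| = (x:ℚ) - y := by
      intro y hy
      have hy' := Finset.mem_range.mp hy
      have : (y:ℚ) < x := by exact_mod_cast hy'
      rw [abs_of_pos]; linarith
    rw [Finset.prod_congr rfl h1, ← helper_cast_descFactorial, Nat.descFactorial_self]
  · rw [Finset.prod_Ico_eq_prod_range]
    have hN : N + 1 - (x + 1) = N - x := by omega
    have h2 : ∀ t ∈ Finset.range (N - x), (fun y : ℕ => |(x:ℚ) - y|) (x+1+t) = ((t:ℚ)+1) := by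
      intro t _
      push_cast
      rw [abs_sub_comm, abs_of_pos] <;> ring_nf
      positivity
    rw [hN, Finset.prod_congr rfl h2]
    rw [← Finset.prod_range_add_one_eq_factorial (N - x)]
    push_cast
    ring

lemma helper_sq {k : ℕ} (v : Fin k → ℕ) (hv : StrictMono v) :
    ∏ p : Fin k, ∏ q ∈ Finset.univ.erase p, |(v p : ℚ) - v q|
      = (∏ i : Fin k, ∏ j ∈ Finset.Ioi i, ((v j : ℚ) - v i))^2 := by
  have h1 : ∀ p : Fin k, Finset.univ.erase p = Finset.Iio p ∪ Finset.Ioi p := by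
    intro p
    ext q
    simp only [Finset.mem_erase, Finset.mem_union, Finset.mem_Iio, Finset.mem_Ioi,
      Finset.mem_univ, and_true]
    constructor
    · intro h; exact lt_or_gt_of_ne h
    · intro h; rcases h with h | h
      · exact ne_of_lt h
      · exact ne_of_gt h
  have hdis : ∀ p : Fin k, Disjoint (Finset.Iio p) (Finset.Ioi p) := by
    intro p
    simp only [Finset.disjoint_left, Finset.mem_Iio, Finset.mem_Ioi]
    intro q hq hq'
    exact absurd (hq.trans hq') (lt_irrefl q)
  calc ∏ p : Fin k, ∏ q ∈ Finset.univ.erase p, |(v p : ℚ) - v q|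
      = ∏ p : Fin k, ((∏ q ∈ Finset.Iio p, |(v p : ℚ) - v q|)
          * ∏ q ∈ Finset.Ioi p, |(v p : ℚ) - v q|) := by
        refine Finset.prod_congr rfl fun p _ => ?_
        rw [h1 p, Finset.prod_union (hdis p)]
    _ = (∏ p : Fin k, ∏ q ∈ Finset.Iio p, ((v p : ℚ) - v q))
          * ∏ p : Fin k, ∏ q ∈ Finset.Ioi p, ((v q : ℚ) - v p) := by
        rw [Finset.prod_mul_distrib]
        congr 1
        · refine Finset.prod_congr rfl fun p _ => Finset.prod_congr rfl fun q hq => ?_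
          have : (v q : ℚ) < v p := by exact_mod_cast hv (Finset.mem_Iio.mp hq)
          rw [abs_of_pos]; linarith
        · refine Finset.prod_congr rfl fun p _ => Finset.prod_congr rfl fun q hq => ?_
          have : (v p : ℚ) < v q := by exact_mod_cast hv (Finset.mem_Ioi.mp hq)
          rw [abs_of_neg] <;> [ring; linarith]
    _ = (∏ i : Fin k, ∏ j ∈ Finset.Ioi i, ((v j : ℚ) - v i))^2 := by
        rw [helper_prod_swap (fun p q => (v p : ℚ) - v q), sq]

lemma helper_star (n m : ℕ) (a : Fin (n+1) → ℕ) (b : Fin m → ℕ)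
    (ha : StrictMono a) (hb : StrictMono b)
    (hdisj : Disjoint (Finset.univ.image a) (Finset.univ.image b))
    (hunion : Finset.univ.image a ∪ Finset.univ.image b = Finset.range (n + m + 1)) :
    (∏ i : Fin m, ∏ j ∈ Finset.Ioi i, ((b j : ℚ) - b i))
      * ∏ k ∈ Finset.range (n+m+1), ((Nat.factorial k : ℕ) : ℚ)
    = (∏ i : Fin (n+1), ∏ j ∈ Finset.Ioi i, ((a j : ℚ) - a i))
      * ∏ i : Fin m, (((Nat.factorial (b i) : ℕ) : ℚ)
          * ((Nat.factorial (n + m - b i) : ℕ) : ℚ)) := by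
  have hainj := ha.injective
  have hbinj := hb.injective
  have hamem : ∀ l, a l ≤ n + m := by
    intro l
    have : a l ∈ Finset.range (n+m+1) := by
      rw [← hunion]
      exact Finset.mem_union_left _ (Finset.mem_image_of_mem a (Finset.mem_univ l))
    have := Finset.mem_range.mp this; omega
  have hbmem : ∀ i, b i ≤ n + m := by
    intro i
    have : b i ∈ Finset.range (n+m+1) := by
      rw [← hunion]
      exact Finset.mem_union_right _ (Finset.mem_image_of_mem b (Finset.mem_univ i))
    have := Finset.mem_range.mp this; omega
  have hne : ∀ (i : Fin m) (l : Fin (n+1)), (b i : ℚ) ≠ (a l : ℚ) := by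
    intro i l h
    have h' : b i = a l := by exact_mod_cast h
    have h1 : a l ∈ Finset.univ.image a := Finset.mem_image_of_mem a (Finset.mem_univ l)
    have h2 : a l ∈ Finset.univ.image b := h' ▸ Finset.mem_image_of_mem b (Finset.mem_univ i)
    exact Finset.disjoint_left.mp hdisj h1 h2
  -- splitting lemmas
  have split : ∀ G : ℕ → ℚ, ∏ y ∈ Finset.range (n+m+1), G y
      = (∏ l : Fin (n+1), G (a l)) * ∏ i : Fin m, G (b i) := by
    intro G
    rw [← hunion, Finset.prod_union hdisj,
      Finset.prod_image (fun x _ y _ h => hainj h),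
      Finset.prod_image (fun x _ y _ h => hbinj h)]
  have eraseA : ∀ l₀ : Fin (n+1), (Finset.range (n+m+1)).erase (a l₀)
      = ((Finset.univ.erase l₀).image a) ∪ Finset.univ.image b := by
    intro l₀
    rw [← hunion, Finset.erase_union_distrib,
      Finset.erase_eq_of_notMem
        (fun h => Finset.disjoint_left.mp hdisj
          (Finset.mem_image_of_mem a (Finset.mem_univ l₀)) h),
      Finset.image_erase hainj]
  have eraseB : ∀ i₀ : Fin m, (Finset.range (n+m+1)).erase (b i₀)
      = (Finset.univ.image a) ∪ ((Finset.univ.erase i₀).image b) := by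
    intro i₀
    rw [← hunion, Finset.erase_union_distrib,
      Finset.erase_eq_of_notMem
        (fun h => Finset.disjoint_right.mp hdisj
          (Finset.mem_image_of_mem b (Finset.mem_univ i₀)) h),
      Finset.image_erase hbinj]
  have splitA : ∀ (l₀ : Fin (n+1)) (G : ℕ → ℚ),
      ∏ z ∈ (Finset.range (n+m+1)).erase (a l₀), G z
        = (∏ l ∈ Finset.univ.erase l₀, G (a l)) * ∏ i : Fin m, G (b i) := by
    intro l₀ G
    rw [eraseA l₀, Finset.prod_union (Finset.disjoint_of_subset_left
        (Finset.image_subset_image (Finset.erase_subset _ _)) hdisj),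
      Finset.prod_image (fun x _ y _ h => hainj h),
      Finset.prod_image (fun x _ y _ h => hbinj h)]
  have splitB : ∀ (i₀ : Fin m) (G : ℕ → ℚ),
      ∏ z ∈ (Finset.range (n+m+1)).erase (b i₀), G z
        = (∏ l : Fin (n+1), G (a l)) * ∏ i ∈ Finset.univ.erase i₀, G (b i) := by
    intro i₀ G
    rw [eraseB i₀, Finset.prod_union (Finset.disjoint_of_subset_right
        (Finset.image_subset_image (Finset.erase_subset _ _)) hdisj),
      Finset.prod_image (fun x _ y _ h => hainj h),
      Finset.prod_image (fun x _ y _ h => hbinj h)]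
  set Da : ℚ := ∏ i : Fin (n+1), ∏ j ∈ Finset.Ioi i, ((a j : ℚ) - a i) with hDa
  set Db : ℚ := ∏ i : Fin m, ∏ j ∈ Finset.Ioi i, ((b j : ℚ) - b i) with hDb
  set P : ℚ := ∏ i : Fin m, ∏ l : Fin (n+1), |(b i : ℚ) - a l| with hP
  set F : ℚ := ∏ k ∈ Finset.range (n+m+1), ((Nat.factorial k : ℕ) : ℚ) with hF
  have hPcomm : ∏ l : Fin (n+1), ∏ i : Fin m, |(a l : ℚ) - b i| = P := by
    rw [Finset.prod_comm]
    exact Finset.prod_congr rfl fun i _ => Finset.prod_congr rfl fun l _ => abs_sub_comm _ _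
  -- e1
  have e1 : ∏ y ∈ Finset.range (n+m+1), ∏ z ∈ (Finset.range (n+m+1)).erase y,
      |(y : ℚ) - z| = F * F := by
    have h1 : ∀ y ∈ Finset.range (n+m+1), ∏ z ∈ (Finset.range (n+m+1)).erase y, |(y:ℚ) - z|
        = ((Nat.factorial y : ℕ) : ℚ) * ((Nat.factorial (n+m-y) : ℕ) : ℚ) := by
      intro y hy
      exact helper_erase_range (n+m) y (by have := Finset.mem_range.mp hy; omega)
    rw [Finset.prod_congr rfl h1, Finset.prod_mul_distrib]
    congr 1
    rw [hF]
    have hrefl := Finset.prod_range_reflect (fun j => ((Nat.factorial j : ℕ) : ℚ)) (n+m+1)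
    rw [← hrefl]
    refine Finset.prod_congr rfl fun j hj => ?_
    congr 2
  -- e2
  have e2 : ∏ y ∈ Finset.range (n+m+1), ∏ z ∈ (Finset.range (n+m+1)).erase y,
      |(y : ℚ) - z| = (Da^2 * P) * (P * Db^2) := by
    rw [split (fun y => ∏ z ∈ (Finset.range (n+m+1)).erase y, |(y : ℚ) - z|)]
    congr 1
    · have h2 : ∀ l : Fin (n+1), ∏ z ∈ (Finset.range (n+m+1)).erase (a l), |((a l : ℕ) : ℚ) - z|
          = (∏ l' ∈ Finset.univ.erase l, |(a l : ℚ) - a l'|) * ∏ i : Fin m, |(a l : ℚ) - b i| :=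
        fun l => splitA l (fun z => |((a l : ℕ) : ℚ) - z|)
      rw [Finset.prod_congr rfl (fun l _ => h2 l), Finset.prod_mul_distrib,
        helper_sq a ha, hPcomm]
    · have h2 : ∀ i : Fin m, ∏ z ∈ (Finset.range (n+m+1)).erase (b i), |((b i : ℕ) : ℚ) - z|
          = (∏ l : Fin (n+1), |(b i : ℚ) - a l|) * ∏ i' ∈ Finset.univ.erase i, |(b i : ℚ) - b i'| :=
        fun i => splitB i (fun z => |((b i : ℕ) : ℚ) - z|)
      rw [Finset.prod_congr rfl (fun i _ => h2 i), Finset.prod_mul_distrib,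
        helper_sq b hb]
  -- e3
  have e3 : ∏ i : Fin m, (((Nat.factorial (b i) : ℕ) : ℚ)
      * ((Nat.factorial (n + m - b i) : ℕ) : ℚ)) = P * Db^2 := by
    have h3 : ∀ i : Fin m, ((Nat.factorial (b i) : ℕ) : ℚ)
        * ((Nat.factorial (n + m - b i) : ℕ) : ℚ)
        = (∏ l : Fin (n+1), |(b i : ℚ) - a l|)
          * ∏ i' ∈ Finset.univ.erase i, |(b i : ℚ) - b i'| := by
      intro i
      rw [← helper_erase_range (n+m) (b i) (hbmem i)]
      exact splitB i (fun z => |((b i : ℕ) : ℚ) - z|)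
    rw [Finset.prod_congr rfl (fun i _ => h3 i), Finset.prod_mul_distrib, helper_sq b hb]
  -- positivity
  have hDapos : 0 < Da := by
    rw [hDa]
    refine Finset.prod_pos fun i _ => Finset.prod_pos fun j hj => ?_
    have : (a i : ℚ) < a j := by exact_mod_cast ha (Finset.mem_Ioi.mp hj)
    linarith
  have hDbpos : 0 < Db := by
    rw [hDb]
    refine Finset.prod_pos fun i _ => Finset.prod_pos fun j hj => ?_
    have : (b i : ℚ) < b j := by exact_mod_cast hb (Finset.mem_Ioi.mp hj)
    linarith
  have hPpos : 0 < P := by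
    rw [hP]
    refine Finset.prod_pos fun i _ => Finset.prod_pos fun l _ => ?_
    exact abs_pos.mpr (sub_ne_zero.mpr (hne i l))
  have hFpos : 0 < F := by
    rw [hF]
    refine Finset.prod_pos fun k _ => ?_
    exact_mod_cast Nat.factorial_pos k
  have key : F = Da * Db * P := by
    have h : F * F = (Da * Db * P) * (Da * Db * P) := by
      have h := e1.symm.trans e2
      rw [h]; ring
    rcases mul_self_eq_mul_self_iff.mp h with h' | h'
    · exact h'
    · exfalso
      have hpos : 0 < Da * Db * P := mul_pos (mul_pos hDapos hDbpos) hPpos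
      rw [h'] at hFpos
      linarith
  rw [e3, key]
  ring


lemma helper_vdm_id (k : ℕ) :
    (∏ i : Fin k, ∏ j ∈ Finset.Ioi i, (((j:ℕ):ℚ) - ((i:ℕ):ℚ)))
      = ∏ x ∈ Finset.range k, ((Nat.factorial x : ℕ) : ℚ) := by
  cases k with
  | zero => simp
  | succ k =>
    rw [← Matrix.det_vandermonde (fun i : Fin (k+1) => ((i:ℕ) : ℚ)),
      Matrix.det_vandermonde_id_eq_superFactorial (R := ℚ) k, ← Nat.prod_range_succ_factorial k,
      Nat.cast_prod]

lemma helper_det1 (n : ℕ) (v : Fin (n+1) → ℕ) :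
    (Matrix.of fun i j : Fin (n+1) => ((v i + (j:ℕ)).choose (j:ℕ) : ℚ)).det
      * ∏ j : Fin (n+1), ((Nat.factorial (j:ℕ) : ℕ) : ℚ)
    = ∏ i : Fin (n+1), ∏ j ∈ Finset.Ioi i, ((v j : ℚ) - v i) := by
  have hdet := Matrix.det_eval_matrixOfPolynomials_eq_det_vandermonde
    (fun i : Fin (n+1) => (v i : ℚ))
    (fun j : Fin (n+1) => (ascPochhammer ℚ (j:ℕ)).comp (X + C 1))
    (fun j => by
      rw [natDegree_comp, ascPochhammer_natDegree, natDegree_X_add_C, mul_one])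
    (fun j => (monic_ascPochhammer ℚ (j:ℕ)).comp_X_add_C 1)
  beta_reduce at hdet
  have hentry : ∀ i j : Fin (n+1),
      ((ascPochhammer ℚ (j:ℕ)).comp (X + C 1)).eval ((v i : ℕ) : ℚ)
        = ((Nat.factorial (j:ℕ) : ℕ) : ℚ) * ((v i + (j:ℕ)).choose (j:ℕ) : ℚ) := by
    intro i j
    rw [eval_comp]
    simp only [eval_add, eval_X, eval_C]
    have : ((v i : ℕ) : ℚ) + 1 = ((v i + 1 : ℕ) : ℚ) := by push_cast; ring
    rw [this, ← Nat.cast_ascFactorial, Nat.ascFactorial_eq_factorial_mul_choose]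
    push_cast
    ring
  have hmat : (Matrix.of fun i j : Fin (n+1) =>
      Polynomial.eval ((v i : ℕ) : ℚ) ((ascPochhammer ℚ (j:ℕ)).comp (X + C 1)))
    = Matrix.of fun i j : Fin (n+1) => ((Nat.factorial (j:ℕ) : ℕ) : ℚ)
        * (Matrix.of fun i j : Fin (n+1) => ((v i + (j:ℕ)).choose (j:ℕ) : ℚ)) i j := by
    ext i j
    exact hentry i j
  rw [Matrix.det_vandermonde, hmat, Matrix.det_mul_row] at hdet
  rw [hdet]
  ring

lemma helper_det2 (n : ℕ) (v : Fin (n+1) → ℕ) :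
    (Matrix.of fun i j : Fin (n+1) => ((v i).choose (j:ℕ) : ℚ)).det
      * ∏ j : Fin (n+1), ((Nat.factorial (j:ℕ) : ℕ) : ℚ)
    = ∏ i : Fin (n+1), ∏ j ∈ Finset.Ioi i, ((v j : ℚ) - v i) := by
  have hdet := Matrix.det_eval_matrixOfPolynomials_eq_det_vandermonde
    (fun i : Fin (n+1) => (v i : ℚ))
    (fun j : Fin (n+1) => descPochhammer ℚ (j:ℕ))
    (fun j => descPochhammer_natDegree ℚ (j:ℕ))
    (fun j => monic_descPochhammer ℚ (j:ℕ))
  beta_reduce at hdet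
  have hentry : ∀ i j : Fin (n+1),
      (descPochhammer ℚ (j:ℕ)).eval ((v i : ℕ) : ℚ)
        = ((Nat.factorial (j:ℕ) : ℕ) : ℚ) * ((v i).choose (j:ℕ) : ℚ) := by
    intro i j
    rw [descPochhammer_eval_eq_descFactorial, Nat.descFactorial_eq_factorial_mul_choose]
    push_cast
    ring
  have hmat : (Matrix.of fun i j : Fin (n+1) =>
      Polynomial.eval ((v i : ℕ) : ℚ) (descPochhammer ℚ (j:ℕ)))
    = Matrix.of fun i j : Fin (n+1) => ((Nat.factorial (j:ℕ) : ℕ) : ℚ)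
        * (Matrix.of fun i j : Fin (n+1) => ((v i).choose (j:ℕ) : ℚ)) i j := by
    ext i j
    exact hentry i j
  rw [Matrix.det_vandermonde, hmat, Matrix.det_mul_row] at hdet
  rw [hdet]
  ring

noncomputable def qp (n m : ℕ) (j : ℕ) : ℚ[X] :=
  descPochhammer ℚ j *
    ((descPochhammer ℚ (m - 1 - j)).comp (Polynomial.C ((n : ℚ) + m) - Polynomial.X))

lemma qp_natDegree_lt (n m : ℕ) (j : ℕ) (hj : j < m) : (qp n m j).natDegree < m := by
  have h2 : ((descPochhammer ℚ (m-1-j)).comp (C ((n:ℚ)+m) - X)).natDegree ≤ m-1-j := by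
    refine le_trans natDegree_comp_le ?_
    have h3 : (C ((n:ℚ)+m) - X).natDegree = 1 := by
      rw [← natDegree_neg, neg_sub, natDegree_X_sub_C]
    rw [h3, mul_one, descPochhammer_natDegree]
  calc (qp n m j).natDegree
      ≤ (descPochhammer ℚ j).natDegree
        + ((descPochhammer ℚ (m-1-j)).comp (C ((n:ℚ)+m) - X)).natDegree := natDegree_mul_le
    _ < m := by
        rw [descPochhammer_natDegree]
        omega

lemma qp_eval (n m : ℕ) (j : ℕ) (c : ℕ) (hc : c ≤ n + m) :
    (qp n m j).eval ((c:ℕ) : ℚ)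
      = ((c.descFactorial j : ℕ) : ℚ) * (((n + m - c).descFactorial (m - 1 - j) : ℕ) : ℚ) := by
  unfold qp
  rw [eval_mul, eval_comp]
  simp only [eval_sub, eval_C, eval_X]
  have h1 : ((n:ℚ) + m - c) = (((n + m - c : ℕ) : ℕ) : ℚ) := by
    push_cast [Nat.cast_sub hc]
    ring
  rw [h1, descPochhammer_eval_eq_descFactorial, descPochhammer_eval_eq_descFactorial]

lemma helper_eval_lt {m : ℕ} (v : Fin m → ℚ) (p : Fin m → ℚ[X])
    (hdeg : ∀ j, (p j).natDegree < m) :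
    Matrix.of (fun i j => ((p j).eval (v i))) =
      (Matrix.vandermonde v) * (Matrix.of fun (i j : Fin m) => (p j).coeff i) := by
  ext i j
  rw [Matrix.mul_apply, Matrix.of_apply, eval, eval₂]
  simp only [eq_intCast, Int.cast_id, Matrix.vandermonde]
  have hs : (p j).support ⊆ Finset.range m := supp_subset_range (hdeg j)
  rw [Polynomial.sum_eq_of_subset _ (fun j => zero_mul ((v i) ^ j)) hs,
    ← Fin.sum_univ_eq_sum_range]
  congr
  ext k
  rw [mul_comm, Matrix.of_apply, RingHom.id_apply]
  rfl

lemma helper_nat_id (n m c j : ℕ) (hj : j < m) (hc : c ≤ n + m) (hjc : j ≤ c) :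
    c.descFactorial j * (n+m-c).descFactorial (m-1-j) * Nat.factorial (n+1)
      = (n+1).choose (c-j) * (Nat.factorial c * Nat.factorial (n+m-c)) := by
  rcases le_or_gt (c - j) (n+1) with hle | hgt
  · have h1 : Nat.factorial (c-j) * c.descFactorial j = Nat.factorial c :=
      Nat.factorial_mul_descFactorial hjc
    have h2 : Nat.factorial (n+1-(c-j)) * (n+m-c).descFactorial (m-1-j)
        = Nat.factorial (n+m-c) := by
      have he : n+m-c - (m-1-j) = n+1-(c-j) := by omega
      rw [← he]
      exact Nat.factorial_mul_descFactorial (by omega)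
    have h3 := Nat.choose_mul_factorial_mul_factorial hle
    apply Nat.eq_of_mul_eq_mul_right (Nat.factorial_pos (c-j))
    apply Nat.eq_of_mul_eq_mul_right (Nat.factorial_pos (n+1-(c-j)))
    calc c.descFactorial j * (n+m-c).descFactorial (m-1-j) * Nat.factorial (n+1)
          * Nat.factorial (c-j) * Nat.factorial (n+1-(c-j))
        = (Nat.factorial (c-j) * c.descFactorial j)
            * (Nat.factorial (n+1-(c-j)) * (n+m-c).descFactorial (m-1-j))
            * Nat.factorial (n+1) := by ring
      _ = Nat.factorial c * Nat.factorial (n+m-c)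
            * ((n+1).choose (c-j) * Nat.factorial (c-j) * Nat.factorial (n+1-(c-j))) := by
          rw [h1, h2, h3]
      _ = (n+1).choose (c-j) * (Nat.factorial c * Nat.factorial (n+m-c))
            * Nat.factorial (c-j) * Nat.factorial (n+1-(c-j)) := by ring
  · rw [Nat.choose_eq_zero_of_lt hgt,
      Nat.descFactorial_eq_zero_iff_lt.mpr (show n+m-c < m-1-j by omega)]
    simp


/-- The three LGV determinants of the three equivalent path formulations all equal
the Vandermonde ratio `Δ(a_0,…,a_n)/Δ(0,1,…,n)`. Here `b` is the complementary
sequence of `a` in `{0,…,n+m}` and `ã i = a n - a (n - i)`. -/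
theorem stmt_5 (n m : ℕ) (a : Fin (n+1) → ℕ) (b : Fin m → ℕ)
    (h0 : a 0 = 0) (ha : StrictMono a) (hb : StrictMono b)
    (han : a (Fin.last n) = n + m)
    (hdisj : Disjoint (Finset.univ.image a) (Finset.univ.image b))
    (hunion : Finset.univ.image a ∪ Finset.univ.image b = Finset.range (n + m + 1)) :
    let Δa : ℚ := ∏ i : Fin (n+1), ∏ j ∈ Finset.Ioi i, ((a j : ℚ) - a i)
    let Δid : ℚ := ∏ i : Fin (n+1), ∏ j ∈ Finset.Ioi i, (((j : ℕ) : ℚ) - ((i : ℕ) : ℚ))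
    (Matrix.of fun i j : Fin (n+1) => ((a i + (j : ℕ)).choose (j : ℕ) : ℚ)).det = Δa / Δid ∧
    (Matrix.of fun i j : Fin (n+1) =>
      ((a (Fin.last n) - a i.rev).choose (j : ℕ) : ℚ)).det = Δa / Δid ∧
    (Matrix.of fun i j : Fin m =>
      if (j : ℕ) ≤ b i then ((n+1).choose (b i - (j : ℕ)) : ℚ) else 0).det = Δa / Δid := by
  intro Δa Δid
  have hΔid : Δid = ∏ x ∈ Finset.range (n+1), ((Nat.factorial x : ℕ) : ℚ) :=
    helper_vdm_id (n+1)
  have hΔidpos : 0 < Δid := by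
    rw [hΔid]
    exact Finset.prod_pos fun x _ => by exact_mod_cast Nat.factorial_pos x
  have hΔidne : Δid ≠ 0 := ne_of_gt hΔidpos
  have hfinprod : ∏ j : Fin (n+1), ((Nat.factorial (j:ℕ) : ℕ) : ℚ) = Δid := by
    rw [hΔid]
    exact Fin.prod_univ_eq_prod_range (fun x => ((Nat.factorial x : ℕ) : ℚ)) (n+1)
  refine ⟨?_, ?_, ?_⟩
  · -- part (i)
    have h1 := helper_det1 n a
    rw [hfinprod] at h1
    rw [eq_div_iff hΔidne]
    exact h1
  · -- part (ii)
    have h2 := helper_det2 n (fun i => a (Fin.last n) - a i.rev)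
    rw [hfinprod] at h2
    have hcast : ∀ i : Fin (n+1),
        (((a (Fin.last n) - a i.rev : ℕ) : ℕ) : ℚ) = (a (Fin.last n) : ℚ) - a i.rev := by
      intro i
      exact_mod_cast Nat.cast_sub (ha.monotone (Fin.le_last i.rev))
    have hprod : (∏ i : Fin (n+1), ∏ j ∈ Finset.Ioi i,
        (((a (Fin.last n) - a j.rev : ℕ) : ℚ) - ((a (Fin.last n) - a i.rev : ℕ) : ℚ))) = Δa := by
      have step : ∀ i : Fin (n+1), ∀ j ∈ Finset.Ioi i,
          (((a (Fin.last n) - a j.rev : ℕ) : ℚ) - ((a (Fin.last n) - a i.rev : ℕ) : ℚ))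
            = ((a i.rev : ℚ) - a j.rev) := by
        intro i j _
        rw [hcast i, hcast j]
        ring
      rw [Finset.prod_congr rfl (fun i _ => Finset.prod_congr rfl (step i))]
      exact (helper_prod_rev (fun i j => ((a j : ℚ) - a i))).symm
    rw [hprod] at h2
    rw [eq_div_iff hΔidne]
    exact h2
  · -- part (iii)
    have hbmem : ∀ i, b i ≤ n + m := by
      intro i
      have : b i ∈ Finset.range (n+m+1) := by
        rw [← hunion]
        exact Finset.mem_union_right _ (Finset.mem_image_of_mem b (Finset.mem_univ i))
      have := Finset.mem_range.mp this; omega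
    set M : Matrix (Fin m) (Fin m) ℚ := Matrix.of fun i j : Fin m =>
      if (j : ℕ) ≤ b i then ((n+1).choose (b i - (j : ℕ)) : ℚ) else 0 with hM
    set EvalB : Matrix (Fin m) (Fin m) ℚ :=
      Matrix.of fun i j : Fin m => (qp n m (j:ℕ)).eval (((b i : ℕ) : ℚ)) with hEvalB
    set EvalI : Matrix (Fin m) (Fin m) ℚ :=
      Matrix.of fun i j : Fin m => (qp n m (j:ℕ)).eval (((i : ℕ) : ℚ)) with hEvalI
    set Q : Matrix (Fin m) (Fin m) ℚ :=
      Matrix.of fun i j : Fin m => (qp n m (j:ℕ)).coeff (i:ℕ) with hQ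
    set Fac : ℚ := ((Nat.factorial (n+1) : ℕ) : ℚ) with hFac
    set U : ℚ := ∏ i : Fin m, (((Nat.factorial (b i) : ℕ) : ℚ)
        * ((Nat.factorial (n + m - b i) : ℕ) : ℚ)) with hU
    set Δb : ℚ := ∏ i : Fin m, ∏ j ∈ Finset.Ioi i, ((b j : ℚ) - b i) with hΔb
    set Δidm : ℚ := ∏ x ∈ Finset.range m, ((Nat.factorial x : ℕ) : ℚ) with hΔidm
    set Rm : ℚ := ∏ x ∈ Finset.range m, ((Nat.factorial (n+m-x) : ℕ) : ℚ) with hRm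
    -- A1
    have entry : ∀ i j : Fin m, Fac * EvalB i j
        = (((Nat.factorial (b i) : ℕ) : ℚ) * ((Nat.factorial (n + m - b i) : ℕ) : ℚ)) * M i j := by
      intro i j
      have hev := qp_eval n m (j:ℕ) (b i) (hbmem i)
      rw [hEvalB]
      simp only [Matrix.of_apply]
      rw [hev, hM]
      simp only [Matrix.of_apply]
      by_cases hc : (j:ℕ) ≤ b i
      · rw [if_pos hc]
        have hid := helper_nat_id n m (b i) (j:ℕ) j.isLt (hbmem i) hc
        have : (((b i).descFactorial (j:ℕ) * (n+m-(b i)).descFactorial (m-1-(j:ℕ))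
            * Nat.factorial (n+1) : ℕ) : ℚ)
            = (((n+1).choose (b i - (j:ℕ)) * (Nat.factorial (b i) * Nat.factorial (n+m-(b i))) : ℕ) : ℚ) := by
          exact_mod_cast congrArg (fun t => ((t : ℕ) : ℚ)) hid
        push_cast at this
        rw [hFac]
        push_cast
        linarith [this]
      · rw [if_neg hc]
        have : (b i).descFactorial (j:ℕ) = 0 :=
          Nat.descFactorial_eq_zero_iff_lt.mpr (by omega)
        rw [this]
        push_cast
        ring
    have A1 : Fac ^ m * EvalB.det = U * M.det := by
      have l1 : (Matrix.of fun i j : Fin m => Fac * EvalB i j).det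
          = Fac ^ m * EvalB.det := by
        rw [Matrix.det_mul_column]
        congr 1
        rw [Finset.prod_const, Finset.card_univ, Fintype.card_fin]
      have l2 : (Matrix.of fun i j : Fin m => Fac * EvalB i j)
          = Matrix.of fun i j : Fin m => (((Nat.factorial (b i) : ℕ) : ℚ)
            * ((Nat.factorial (n + m - b i) : ℕ) : ℚ)) * M i j := by
        ext i j
        exact entry i j
      rw [← l1, l2, Matrix.det_mul_column, hU]
    -- A2
    have A2 : EvalB = (Matrix.vandermonde fun i : Fin m => ((b i : ℕ) : ℚ)) * Q := by
      rw [hEvalB, hQ]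
      exact helper_eval_lt (fun i => ((b i : ℕ) : ℚ)) (fun j => qp n m (j:ℕ))
        (fun j => qp_natDegree_lt n m (j:ℕ) j.isLt)
    have A2' : EvalB.det = Δb * Q.det := by
      rw [A2, Matrix.det_mul, Matrix.det_vandermonde, hΔb]
    -- A3
    have A3 : EvalI = (Matrix.vandermonde fun i : Fin m => ((i : ℕ) : ℚ)) * Q := by
      rw [hEvalI, hQ]
      exact helper_eval_lt (fun i : Fin m => ((i : ℕ) : ℚ)) (fun j => qp n m (j:ℕ))
        (fun j => qp_natDegree_lt n m (j:ℕ) j.isLt)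
    have A3' : EvalI.det = Δidm * Q.det := by
      rw [A3, Matrix.det_mul, Matrix.det_vandermonde, hΔidm, helper_vdm_id m]
    -- A4 : EvalI is lower triangular
    have A4 : EvalI.det = ∏ i : Fin m, EvalI i i := by
      apply Matrix.det_of_lowerTriangular
      intro i j hij
      have hij' : (i : ℕ) < (j : ℕ) := hij
      rw [hEvalI]
      simp only [Matrix.of_apply]
      rw [qp_eval n m (j:ℕ) (i:ℕ) (by omega)]
      rw [Nat.descFactorial_eq_zero_iff_lt.mpr hij']
      push_cast
      ring
    -- A5
    have A5 : Fac ^ m * (∏ i : Fin m, EvalI i i) = Δidm * Rm := by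
      have l1 : ∀ i : Fin m, Fac * EvalI i i
          = ((Nat.factorial (i:ℕ) : ℕ) : ℚ) * ((Nat.factorial (n+m-(i:ℕ)) : ℕ) : ℚ) := by
        intro i
        rw [hEvalI]
        simp only [Matrix.of_apply]
        rw [qp_eval n m (i:ℕ) (i:ℕ) (by omega), Nat.descFactorial_self]
        have hfd : Nat.factorial (n+1) * (n+m-(i:ℕ)).descFactorial (m-1-(i:ℕ))
            = Nat.factorial (n+m-(i:ℕ)) := by
          have h1 : (n+m-(i:ℕ)) - (m-1-(i:ℕ)) = n+1 := by
            have := i.isLt; omega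
          rw [← h1]
          exact Nat.factorial_mul_descFactorial (by have := i.isLt; omega)
        rw [hFac]
        have hc2 : ((Nat.factorial (n+1) * (n+m-(i:ℕ)).descFactorial (m-1-(i:ℕ)) : ℕ) : ℚ)
            = ((Nat.factorial (n+m-(i:ℕ)) : ℕ) : ℚ) := by exact_mod_cast hfd
        push_cast at hc2 ⊢
        linear_combination ((Nat.factorial (i:ℕ) : ℕ) : ℚ) * hc2
      calc Fac ^ m * (∏ i : Fin m, EvalI i i)
          = ∏ i : Fin m, (Fac * EvalI i i) := by
            rw [Finset.prod_mul_distrib, Finset.prod_const, Finset.card_univ, Fintype.card_fin]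
        _ = ∏ i : Fin m, (((Nat.factorial (i:ℕ) : ℕ) : ℚ)
              * ((Nat.factorial (n+m-(i:ℕ)) : ℕ) : ℚ)) := Finset.prod_congr rfl fun i _ => l1 i
        _ = Δidm * Rm := by
            rw [Finset.prod_mul_distrib, hΔidm, hRm,
              Fin.prod_univ_eq_prod_range (fun x => ((Nat.factorial x : ℕ) : ℚ)) m,
              Fin.prod_univ_eq_prod_range (fun x => ((Nat.factorial (n+m-x) : ℕ) : ℚ)) m]
    -- star identity
    have hstar := helper_star n m a b ha hb hdisj hunion
    -- split of the big factorial product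
    have hsplit : ∏ k ∈ Finset.range (n+m+1), ((Nat.factorial k : ℕ) : ℚ) = Δid * Rm := by
      have h1 : n+m+1 = (n+1)+m := by omega
      rw [h1, Finset.prod_range_add, ← hΔid]
      congr 1
      rw [hRm]
      have := Finset.prod_range_reflect (fun x => ((Nat.factorial ((n+1)+x) : ℕ) : ℚ)) m
      rw [← this]
      refine Finset.prod_congr rfl fun x hx => ?_
      have := Finset.mem_range.mp hx
      congr 2
      omega
    -- nonvanishing
    have hΔidmne : Δidm ≠ 0 := by
      rw [hΔidm]
      exact ne_of_gt (Finset.prod_pos fun x _ => by exact_mod_cast Nat.factorial_pos x)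
    have hUne : U ≠ 0 := by
      rw [hU]
      apply ne_of_gt
      refine Finset.prod_pos fun i _ => mul_pos ?_ ?_ <;>
        exact_mod_cast Nat.factorial_pos _
    -- combine
    have key : (U * M.det) * Δidm = (Δb * Rm) * Δidm := by
      calc (U * M.det) * Δidm
          = (Fac ^ m * EvalB.det) * Δidm := by rw [A1]
        _ = Fac ^ m * (Δb * Q.det) * Δidm := by rw [A2']
        _ = Δb * (Fac ^ m * (Δidm * Q.det)) := by ring
        _ = Δb * (Fac ^ m * EvalI.det) := by rw [A3']
        _ = Δb * (Fac ^ m * ∏ i : Fin m, EvalI i i) := by rw [A4]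
        _ = Δb * (Δidm * Rm) := by rw [A5]
        _ = (Δb * Rm) * Δidm := by ring
    have k2 : U * M.det = Δb * Rm := mul_right_cancel₀ hΔidmne key
    have k3 : U * (M.det * Δid) = U * Δa := by
      calc U * (M.det * Δid) = (U * M.det) * Δid := by ring
        _ = (Δb * Rm) * Δid := by rw [k2]
        _ = Δb * (Δid * Rm) := by ring
        _ = Δb * ∏ k ∈ Finset.range (n+m+1), ((Nat.factorial k : ℕ) : ℚ) := by rw [hsplit]
        _ = Δa * U := hstar
        _ = U * Δa := by ring
    have k4 : M.det * Δid = Δa := mul_left_cancel₀ hUne k3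
    rw [eq_div_iff hΔidne]
    exact k4
end

section
/- Let $0 = a_0 < a_1 < \cdots < a_n$ be strictly increasing integers with $a_n = n+m$, and let $b_1 < \cdots < b_m$ be the complementary sequence in $\{0,1,\dots,n+m\}$. Then $\Delta(0,1,\dots,n+m) = \frac{\Delta(a_0,\dots,a_n)}{\Delta(b_1,\dots,b_m)}\prod_{q=1}^{m} b_q!\,(n+m-b_q)!$, where $\Delta$ is the Vandermonde product. -/
open Finset

/-- Product of `|x - y|` over ordered pairs of distinct elements of `T`. -/
noncomputable def Dd (T : Finset ℕ) : ℚ :=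
  ∏ x ∈ T, ∏ y ∈ T.erase x, |(x : ℚ) - y|

lemma nat_prod_range_sub (y : ℕ) :
    ∏ x ∈ Finset.range y, (y - x) = Nat.factorial y := by
  rw [← Finset.prod_range_reflect, ← Finset.prod_range_add_one_eq_factorial]
  apply Finset.prod_congr rfl
  intro j hj
  have := Finset.mem_range.mp hj
  omega

lemma prod_range_sub_eq_factorial (y : ℕ) :
    ∏ x ∈ Finset.range y, ((y : ℚ) - x) = Nat.factorial y := by
  rw [← nat_prod_range_sub y, Nat.cast_prod]
  apply Finset.prod_congr rfl
  intro x hx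
  have := Finset.mem_range.mp hx
  rw [Nat.cast_sub (by omega)]

lemma prod_Ico_sub_eq_factorial (y N : ℕ) (h : y ≤ N) :
    ∏ x ∈ Finset.Ico (y+1) (N+1), ((x : ℚ) - y) = Nat.factorial (N - y) := by
  rw [Finset.prod_Ico_eq_prod_range]
  have hN : N + 1 - (y + 1) = N - y := by omega
  rw [hN, ← Finset.prod_range_add_one_eq_factorial (N - y), Nat.cast_prod]
  apply Finset.prod_congr rfl
  intro j _
  push_cast; ring

lemma key_erase_prod (y N : ℕ) (h : y ≤ N) :
    ∏ x ∈ (Finset.range (N+1)).erase y, |(y : ℚ) - x| =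
      Nat.factorial y * Nat.factorial (N - y) := by
  have hsplit : (Finset.range (N+1)).erase y = Finset.range y ∪ Finset.Ico (y+1) (N+1) := by
    ext x
    simp only [Finset.mem_erase, Finset.mem_range, Finset.mem_union, Finset.mem_Ico]
    omega
  have hdisj : Disjoint (Finset.range y) (Finset.Ico (y+1) (N+1)) := by
    rw [Finset.disjoint_left]
    intro x hx hx'
    simp only [Finset.mem_range] at hx
    simp only [Finset.mem_Ico] at hx'
    omega
  rw [hsplit, Finset.prod_union hdisj]
  have h1 : ∏ x ∈ Finset.range y, |(y : ℚ) - x| = ∏ x ∈ Finset.range y, ((y : ℚ) - x) := by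
    apply Finset.prod_congr rfl
    intro x hx
    have : (x : ℚ) < y := by exact_mod_cast Finset.mem_range.mp hx
    rw [abs_of_nonneg (by linarith)]
  have h2 : ∏ x ∈ Finset.Ico (y+1) (N+1), |(y : ℚ) - x|
      = ∏ x ∈ Finset.Ico (y+1) (N+1), ((x : ℚ) - y) := by
    apply Finset.prod_congr rfl
    intro x hx
    have hyx : y < x := by have := (Finset.mem_Ico.mp hx).1; omega
    have : (y : ℚ) < x := by exact_mod_cast hyx
    rw [abs_sub_comm, abs_of_nonneg (by linarith)]
  rw [h1, h2, prod_range_sub_eq_factorial, prod_Ico_sub_eq_factorial y N h]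

lemma Dd_union (A B : Finset ℕ) (h : Disjoint A B) :
    Dd (A ∪ B) = Dd A * Dd B * (∏ x ∈ A, ∏ y ∈ B, |(x : ℚ) - y|)^2 := by
  unfold Dd
  rw [Finset.prod_union h]
  have t1 : ∏ x ∈ A, ∏ y ∈ (A ∪ B).erase x, |(x:ℚ) - y|
      = (∏ x ∈ A, ∏ y ∈ A.erase x, |(x:ℚ) - y|) * ∏ x ∈ A, ∏ y ∈ B, |(x:ℚ) - y| := by
    rw [← Finset.prod_mul_distrib]
    apply Finset.prod_congr rfl
    intro x hx
    rw [Finset.erase_union_distrib,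
      Finset.erase_eq_of_notMem (Finset.disjoint_left.mp h hx),
      Finset.prod_union (h.mono_left (Finset.erase_subset _ _))]
  have t2 : ∏ x ∈ B, ∏ y ∈ (A ∪ B).erase x, |(x:ℚ) - y|
      = (∏ x ∈ B, ∏ y ∈ A, |(x:ℚ) - y|) * ∏ x ∈ B, ∏ y ∈ B.erase x, |(x:ℚ) - y| := by
    rw [← Finset.prod_mul_distrib]
    apply Finset.prod_congr rfl
    intro x hx
    rw [Finset.erase_union_distrib,
      Finset.erase_eq_of_notMem (Finset.disjoint_right.mp h hx),
      Finset.prod_union (h.mono_right (Finset.erase_subset _ _))]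
  have hswap : ∏ x ∈ B, ∏ y ∈ A, |(x:ℚ) - y| = ∏ x ∈ A, ∏ y ∈ B, |(x:ℚ) - y| := by
    rw [Finset.prod_comm]
    apply Finset.prod_congr rfl
    intro x _
    apply Finset.prod_congr rfl
    intro y _
    rw [abs_sub_comm]
  rw [t1, t2, hswap]; ring

lemma Dd_image_sq {k : ℕ} (f : Fin k → ℕ) (hf : StrictMono f) :
    Dd (Finset.image f Finset.univ) =
      (∏ i : Fin k, ∏ j ∈ Finset.Ioi i, ((f j : ℚ) - f i))^2 := by
  unfold Dd
  have hinj : Function.Injective f := hf.injective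
  rw [Finset.prod_image (fun x _ y _ h => hinj h)]
  have step : ∀ i : Fin k, ∏ y ∈ (Finset.image f Finset.univ).erase (f i), |(f i : ℚ) - y|
      = ∏ j ∈ Finset.univ.erase i, |(f i : ℚ) - f j| := by
    intro i
    rw [← Finset.image_erase hinj, Finset.prod_image (fun x _ y _ h => hinj h)]
  have hsplit : ∀ i : Fin k, (Finset.univ.erase i : Finset (Fin k))
      = Finset.Iio i ∪ Finset.Ioi i := by
    intro i
    ext j
    simp only [Finset.mem_erase, Finset.mem_univ, and_true, Finset.mem_union,
      Finset.mem_Iio, Finset.mem_Ioi]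
    exact ⟨fun h => h.lt_or_gt, fun h => h.elim (fun h => h.ne) (fun h => h.ne')⟩
  have hd : ∀ i : Fin k, Disjoint (Finset.Iio i) (Finset.Ioi i) := by
    intro i
    rw [Finset.disjoint_left]
    intro j hj hj'
    simp only [Finset.mem_Iio] at hj
    simp only [Finset.mem_Ioi] at hj'
    exact absurd (hj.trans hj') (lt_irrefl j)
  have t1 : ∏ i : Fin k, ∏ y ∈ (Finset.image f Finset.univ).erase (f i), |(f i : ℚ) - y|
      = (∏ i : Fin k, ∏ j ∈ Finset.Iio i, |(f i : ℚ) - f j|)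
        * ∏ i : Fin k, ∏ j ∈ Finset.Ioi i, |(f i : ℚ) - f j| := by
    rw [← Finset.prod_mul_distrib]
    apply Finset.prod_congr rfl
    intro i _
    rw [step i, hsplit i, Finset.prod_union (hd i)]
  rw [t1]
  have hcomm : ∏ i : Fin k, ∏ j ∈ Finset.Iio i, |(f i : ℚ) - f j|
      = ∏ j : Fin k, ∏ i ∈ Finset.Ioi j, |(f i : ℚ) - f j| := by
    apply Finset.prod_comm'
    intro i j
    simp [Finset.mem_Iio, Finset.mem_Ioi]
  have habs : ∀ i : Fin k, ∀ j ∈ Finset.Ioi i, |(f j : ℚ) - f i| = (f j : ℚ) - f i := by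
    intro i j hj
    have h1 : f i < f j := hf (Finset.mem_Ioi.mp hj)
    have : (f i : ℚ) < f j := by exact_mod_cast h1
    rw [abs_of_nonneg (by linarith)]
  have habs2 : ∀ i : Fin k, ∀ j ∈ Finset.Ioi i, |(f i : ℚ) - f j| = (f j : ℚ) - f i := by
    intro i j hj
    rw [abs_sub_comm]; exact habs i j hj
  rw [hcomm,
    Finset.prod_congr rfl fun i (_ : i ∈ Finset.univ) => Finset.prod_congr rfl (habs i),
    Finset.prod_congr rfl fun i (_ : i ∈ Finset.univ) => Finset.prod_congr rfl (habs2 i)]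
  ring

lemma image_val_univ_eq_range (k : ℕ) :
    Finset.image Fin.val (Finset.univ : Finset (Fin k)) = Finset.range k := by
  ext x
  simp only [Finset.mem_image, Finset.mem_univ, true_and, Finset.mem_range]
  constructor
  · rintro ⟨i, rfl⟩; exact i.isLt
  · intro hx; exact ⟨⟨x, hx⟩, rfl⟩

/-- Complementarity identity for Vandermonde products:
`Δ(0,…,n+m) = Δ(a)/Δ(b) * ∏_q b_q! (n+m-b_q)!`. -/
theorem stmt_7 (n m : ℕ) (a : Fin (n+1) → ℕ) (b : Fin m → ℕ)
    (h0 : a 0 = 0) (ha : StrictMono a) (hb : StrictMono b)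
    (han : a (Fin.last n) = n + m)
    (hdisj : Disjoint (Finset.univ.image a) (Finset.univ.image b))
    (hunion : Finset.univ.image a ∪ Finset.univ.image b = Finset.range (n + m + 1)) :
    (∏ i : Fin (n+m+1), ∏ j ∈ Finset.Ioi i, (((j : ℕ) : ℚ) - ((i : ℕ) : ℚ))) =
      (∏ i : Fin (n+1), ∏ j ∈ Finset.Ioi i, ((a j : ℚ) - a i)) /
      (∏ i : Fin m, ∏ j ∈ Finset.Ioi i, ((b j : ℚ) - b i)) *
      ∏ q : Fin m, ((Nat.factorial (b q) : ℚ) * (Nat.factorial (n + m - b q) : ℚ)) := by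
  classical
  set N := n + m with hN
  set A := Finset.univ.image a with hAdef
  set B := Finset.univ.image b with hBdef
  set ΔF : ℚ := ∏ i : Fin (N+1), ∏ j ∈ Finset.Ioi i, (((j : ℕ) : ℚ) - ((i : ℕ) : ℚ)) with hΔF
  set Δa : ℚ := ∏ i : Fin (n+1), ∏ j ∈ Finset.Ioi i, ((a j : ℚ) - a i) with hΔa
  set Δb : ℚ := ∏ i : Fin m, ∏ j ∈ Finset.Ioi i, ((b j : ℚ) - b i) with hΔb
  set F : ℚ := ∏ q : Fin m, ((Nat.factorial (b q) : ℚ) * (Nat.factorial (N - b q) : ℚ)) with hF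
  have hΔFpos : 0 < ΔF := by
    apply Finset.prod_pos; intro i _
    apply Finset.prod_pos; intro j hj
    have h1 : i < j := Finset.mem_Ioi.mp hj
    have : ((i : ℕ) : ℚ) < ((j : ℕ) : ℚ) := by exact_mod_cast Fin.lt_def.mp h1
    linarith
  have hΔapos : 0 < Δa := by
    apply Finset.prod_pos; intro i _
    apply Finset.prod_pos; intro j hj
    have h1 : a i < a j := ha (Finset.mem_Ioi.mp hj)
    have : (a i : ℚ) < a j := by exact_mod_cast h1
    linarith
  have hΔbpos : 0 < Δb := by
    apply Finset.prod_pos; intro i _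
    apply Finset.prod_pos; intro j hj
    have h1 : b i < b j := hb (Finset.mem_Ioi.mp hj)
    have : (b i : ℚ) < b j := by exact_mod_cast h1
    linarith
  have hFpos : 0 < F := by
    apply Finset.prod_pos; intro q _; positivity
  -- squared identities
  have hDF : Dd (Finset.range (N+1)) = ΔF^2 := by
    have h1 := Dd_image_sq (k := N+1) Fin.val Fin.val_strictMono
    rw [image_val_univ_eq_range] at h1
    exact h1
  have hDA : Dd A = Δa^2 := Dd_image_sq a ha
  have hDB : Dd B = Δb^2 := Dd_image_sq b hb
  have hmemB_le : ∀ y ∈ B, y ≤ N := by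
    intro y hy
    have h1 : y ∈ Finset.range (N+1) := by
      rw [← hunion]; exact Finset.mem_union_right _ hy
    have := Finset.mem_range.mp h1
    omega
  -- split the full product
  set C : ℚ := ∏ x ∈ A, ∏ y ∈ B, |(x : ℚ) - y| with hC
  have hDsplit : Dd (Finset.range (N+1)) = Dd A * Dd B * C^2 := by
    rw [← hunion]; exact Dd_union A B hdisj
  -- evaluate C
  have hCswap : C = ∏ y ∈ B, ∏ x ∈ A, |(y : ℚ) - x| := by
    rw [hC, Finset.prod_comm]
    apply Finset.prod_congr rfl
    intro y _
    apply Finset.prod_congr rfl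
    intro x _
    rw [abs_sub_comm]
  have hCy : ∀ y ∈ B, (∏ x ∈ A, |(y:ℚ) - x|) * (∏ x ∈ B.erase y, |(y:ℚ) - x|)
      = (Nat.factorial y : ℚ) * Nat.factorial (N - y) := by
    intro y hy
    have hyA : y ∉ A := Finset.disjoint_right.mp hdisj hy
    have hset : A ∪ B.erase y = (Finset.range (N+1)).erase y := by
      rw [← hunion, Finset.erase_union_distrib, Finset.erase_eq_of_notMem hyA]
    have hdisj2 : Disjoint A (B.erase y) := hdisj.mono_right (Finset.erase_subset _ _)
    rw [← Finset.prod_union hdisj2, hset, key_erase_prod y N (hmemB_le y hy)]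
  have hBinner_ne : ∀ y ∈ B, (∏ x ∈ B.erase y, |(y:ℚ) - x|) ≠ 0 := by
    intro y hy
    rw [Finset.prod_ne_zero_iff]
    intro x hx
    have hxy : x ≠ y := Finset.ne_of_mem_erase hx
    have : (y : ℚ) ≠ x := by exact_mod_cast (Ne.symm hxy)
    simpa [sub_eq_zero] using this
  have hCval : C = (∏ y ∈ B, ((Nat.factorial y : ℚ) * Nat.factorial (N - y))) / Dd B := by
    rw [hCswap]
    have : ∀ y ∈ B, ∏ x ∈ A, |(y:ℚ) - x|
        = ((Nat.factorial y : ℚ) * Nat.factorial (N - y)) / ∏ x ∈ B.erase y, |(y:ℚ) - x| := by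
      intro y hy
      rw [eq_div_iff (hBinner_ne y hy)]
      exact hCy y hy
    rw [Finset.prod_congr rfl this, Finset.prod_div_distrib]
    rfl
  have hFB : ∏ y ∈ B, ((Nat.factorial y : ℚ) * Nat.factorial (N - y)) = F := by
    rw [hBdef, Finset.prod_image (fun x _ y _ h => hb.injective h)]
  -- assemble
  have key : ΔF^2 = (Δa / Δb * F)^2 := by
    have h1 : ΔF^2 = Δa^2 * Δb^2 * (F / Δb^2)^2 := by
      rw [← hDF, hDsplit, hDA, hDB, hCval, hFB, hDB]
    rw [h1]
    field_simp
  have hpos2 : 0 < Δa / Δb * F := by positivity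
  have hzero : (ΔF - Δa / Δb * F) * (ΔF + Δa / Δb * F) = 0 := by
    have : ΔF^2 - (Δa / Δb * F)^2 = 0 := by rw [key]; ring
    nlinarith [this]
  rcases mul_eq_zero.mp hzero with h | h
  · linarith
  · linarith
end

section
/- Let $n \geq 0$, $m \geq 1$, and let $b_1 < \cdots < b_m$ be integers with $0 \leq b_i$ and $b_i \leq n+i-1$ for each $i$. Then $\det\left(\binom{n+1}{b_i - j + 1}\right)_{1 \leq i,j \leq m} = \frac{\Delta(0,1,\dots,n+m)}{\Delta(0,1,\dots,n)} \cdot \frac{\Delta(b_1,\dots,b_m)}{\prod_{i=1}^{m} b_i!\,(n+m-b_i)!}$. -/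
open Polynomial Finset Matrix

namespace Stmt8

noncomputable def Q (n m j : ℕ) : Polynomial ℚ :=
  (∏ s ∈ Finset.range j, (X - C (s:ℚ))) *
  (∏ s ∈ Finset.range (m - 1 - j), (C ((n + 2 + j + s : ℕ) : ℚ) - X))

lemma eval_Q (n m j : ℕ) (x : ℚ) : (Q n m j).eval x =
    (∏ s ∈ Finset.range j, (x - s)) *
    (∏ s ∈ Finset.range (m-1-j), (((n+2+j+s : ℕ):ℚ) - x)) := by
  simp [Q, eval_prod]

lemma natDegree_Q_lt (n m j : ℕ) (hj : j < m) : (Q n m j).natDegree < m := by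
  have h1 : (∏ s ∈ Finset.range j, (X - C (s:ℚ))).natDegree ≤ j := by
    refine le_trans (Polynomial.natDegree_prod_le _ _) ?_
    refine le_trans (Finset.sum_le_sum fun s _ => le_of_eq (Polynomial.natDegree_X_sub_C _)) ?_
    simp
  have h2 : (∏ s ∈ Finset.range (m-1-j), (C ((n + 2 + j + s : ℕ) : ℚ) - X)).natDegree
      ≤ m - 1 - j := by
    refine le_trans (Polynomial.natDegree_prod_le _ _) ?_
    refine le_trans (Finset.sum_le_sum (g := fun _ => 1) fun s _ => ?_) (by simp)
    have h := Polynomial.natDegree_sub_le (C ((n+2+j+s : ℕ):ℚ)) X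
    rwa [Polynomial.natDegree_C, Polynomial.natDegree_X, Nat.max_eq_right (by norm_num)] at h
  have := Polynomial.natDegree_mul_le (p := ∏ s ∈ Finset.range j, (X - C (s:ℚ)))
    (q := ∏ s ∈ Finset.range (m-1-j), (C ((n + 2 + j + s : ℕ) : ℚ) - X))
  have : (Q n m j).natDegree ≤ j + (m-1-j) := le_trans this (by omega)
  omega

lemma prod_add_eq_asc (a : ℕ) : ∀ L, (∏ s ∈ Finset.range L, (a + s)) = a.ascFactorial L
  | 0 => by simp
  | L+1 => by
      rw [Finset.prod_range_succ, prod_add_eq_asc a L, Nat.ascFactorial_succ, mul_comm]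

lemma entry (n m j bi : ℕ) (hj : j < m) (hbi : bi < n + m) :
    (if j ≤ bi then ((n+1).choose (bi - j) : ℚ) else 0) =
      ((n+1).factorial : ℚ) / ((bi.factorial : ℚ) * ((n+m-bi).factorial : ℚ))
        * (Q n m j).eval (bi : ℚ) := by
  rw [eval_Q]
  by_cases hc : j ≤ bi
  · rw [if_pos hc]
    by_cases hb2 : bi ≤ n + 1 + j
    · have e1 : (∏ s ∈ Finset.range j, ((bi:ℚ) - s)) = (bi.descFactorial j : ℚ) := by
        rw [Nat.descFactorial_eq_prod_range, Nat.cast_prod]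
        refine Finset.prod_congr rfl fun s hs => ?_
        rw [Finset.mem_range] at hs
        rw [Nat.cast_sub (by omega)]
      have e2 : (∏ s ∈ Finset.range (m-1-j), (((n+2+j+s : ℕ):ℚ) - bi))
          = (((n+2+j-bi).ascFactorial (m-1-j) : ℕ) : ℚ) := by
        rw [← prod_add_eq_asc, Nat.cast_prod]
        refine Finset.prod_congr rfl fun s hs => ?_
        rw [show n+2+j-bi+s = n+2+j+s-bi by omega, Nat.cast_sub (by omega)]
      rw [e1, e2]
      have f1 : (bi - j).factorial * bi.descFactorial j = bi.factorial :=
        Nat.factorial_mul_descFactorial hc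
      have f2 : (n+1+j-bi).factorial * (n+2+j-bi).ascFactorial (m-1-j)
          = (n+m-bi).factorial := by
        have h := Nat.factorial_mul_ascFactorial (n+1+j-bi) (m-1-j)
        rw [show (n+1+j-bi)+1 = n+2+j-bi by omega,
            show (n+1+j-bi)+(m-1-j) = n+m-bi by omega] at h
        exact h
      have f3 : (n+1).choose (bi-j) * (bi-j).factorial * (n+1+j-bi).factorial
          = (n+1).factorial := by
        have h := Nat.choose_mul_factorial_mul_factorial (n := n+1) (k := bi - j) (by omega)
        rwa [show n+1-(bi-j) = n+1+j-bi by omega] at h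
      have hb0 : ((bi.factorial : ℚ)) ≠ 0 := Nat.cast_ne_zero.2 bi.factorial_ne_zero
      have hb1 : (((n+m-bi).factorial : ℚ)) ≠ 0 := Nat.cast_ne_zero.2 (Nat.factorial_ne_zero _)
      rw [div_mul_eq_mul_div, eq_div_iff (by positivity)]
      have hnat : (n+1).choose (bi-j) * (bi.factorial * (n+m-bi).factorial)
          = (n+1).factorial * (bi.descFactorial j * (n+2+j-bi).ascFactorial (m-1-j)) := by
        calc (n+1).choose (bi-j) * (bi.factorial * (n+m-bi).factorial)
            = (n+1).choose (bi-j) * (((bi - j).factorial * bi.descFactorial j) *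
              ((n+1+j-bi).factorial * (n+2+j-bi).ascFactorial (m-1-j))) := by rw [f1, f2]
          _ = ((n+1).choose (bi-j) * (bi-j).factorial * (n+1+j-bi).factorial) *
              (bi.descFactorial j * (n+2+j-bi).ascFactorial (m-1-j)) := by ring
          _ = _ := by rw [f3]
      exact_mod_cast hnat
    · rw [Nat.choose_eq_zero_of_lt (by omega), Nat.cast_zero]
      have hz : (∏ s ∈ Finset.range (m-1-j), (((n+2+j+s : ℕ):ℚ) - bi)) = 0 := by
        refine Finset.prod_eq_zero (i := bi - (n+2+j)) (Finset.mem_range.2 (by omega)) ?_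
        rw [show n+2+j+(bi-(n+2+j)) = bi by omega]
        ring
      rw [hz]; ring
  · rw [if_neg hc]
    have hz : (∏ s ∈ Finset.range j, ((bi:ℚ) - s)) = 0 := by
      refine Finset.prod_eq_zero (i := bi) (Finset.mem_range.2 (by omega)) ?_
      ring
    rw [hz]; ring

noncomputable def T (n m : ℕ) : Matrix (Fin m) (Fin m) ℚ :=
  Matrix.of fun k j : Fin m => (Q n m (j:ℕ)).coeff (k:ℕ)

lemma det_evalQ (n m : ℕ) (x : Fin m → ℚ) :
    (Matrix.of fun i j : Fin m => (Q n m (j:ℕ)).eval (x i)).det =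
    (∏ i : Fin m, ∏ j ∈ Finset.Ioi i, (x j - x i)) * (T n m).det := by
  have hM : (Matrix.of fun i j : Fin m => (Q n m (j:ℕ)).eval (x i)) =
      (Matrix.vandermonde x) * (T n m) := by
    ext i j
    rw [Matrix.mul_apply]
    simp only [Matrix.of_apply, Matrix.vandermonde_apply, T]
    rw [Polynomial.eval_eq_sum_range' (natDegree_Q_lt n m (j:ℕ) j.isLt) (x i),
      ← Fin.sum_univ_eq_sum_range]
    exact Finset.sum_congr rfl fun k _ => mul_comm _ _
  rw [hM, Matrix.det_mul, Matrix.det_vandermonde]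

lemma master (n m : ℕ) (b : Fin m → ℕ) (hb : ∀ i, b i < n + m) :
    (Matrix.of fun i j : Fin m =>
        if (j : ℕ) ≤ b i then ((n+1).choose (b i - (j : ℕ)) : ℚ) else 0).det =
    (∏ i : Fin m, ((n+1).factorial : ℚ) /
        (((b i).factorial : ℚ) * ((n + m - b i).factorial : ℚ))) *
    ((∏ i : Fin m, ∏ j ∈ Finset.Ioi i, ((b j : ℚ) - (b i : ℚ))) * (T n m).det) := by
  have hA : (Matrix.of fun i j : Fin m =>
        if (j : ℕ) ≤ b i then ((n+1).choose (b i - (j : ℕ)) : ℚ) else 0)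
      = Matrix.of (fun i j : Fin m =>
          (((n+1).factorial : ℚ) / (((b i).factorial : ℚ) * ((n+m - b i).factorial : ℚ)))
            * (Q n m (j:ℕ)).eval ((b i : ℕ) : ℚ)) := by
    ext i j
    exact entry n m (j:ℕ) (b i) j.isLt (hb i)
  rw [hA]
  refine (Matrix.det_mul_column _ (Matrix.of fun i j : Fin m => (Q n m (j:ℕ)).eval ((b i : ℕ) : ℚ))).trans ?_
  congr 1
  exact det_evalQ n m fun i => ((b i : ℕ) : ℚ)

lemma vdm_id (M : ℕ) :
    (∏ i : Fin M, ∏ j ∈ Finset.Ioi i, (((j:ℕ):ℚ) - ((i:ℕ):ℚ)))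
      = ∏ k ∈ Finset.range M, ((k.factorial : ℚ)) := by
  have h1 : ∀ i : Fin M, (∏ j ∈ Finset.Ioi i, (((j:ℕ):ℚ) - ((i:ℕ):ℚ)))
      = ((M - 1 - (i:ℕ)).factorial : ℚ) := by
    intro i
    rw [← Finset.prod_range_add_one_eq_factorial, Nat.cast_prod]
    refine Finset.prod_bij' (i := fun j _ => (j:ℕ) - (i:ℕ) - 1)
      (j := fun t ht => ⟨(i:ℕ) + 1 + t, by
        rw [Finset.mem_range] at ht; omega⟩) ?_ ?_ ?_ ?_ ?_
    · intro a ha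
      rw [Finset.mem_Ioi, Fin.lt_def] at ha
      rw [Finset.mem_range]
      have := a.isLt
      omega
    · intro t ht
      rw [Finset.mem_range] at ht
      rw [Finset.mem_Ioi, Fin.lt_def]
      simp only []
      omega
    · intro a ha
      rw [Finset.mem_Ioi, Fin.lt_def] at ha
      apply Fin.ext
      simp only []
      omega
    · intro t ht
      rw [Finset.mem_range] at ht
      simp only []
      omega
    · intro a ha
      rw [Finset.mem_Ioi, Fin.lt_def] at ha
      rw [show (a:ℕ) - (i:ℕ) - 1 + 1 = (a:ℕ) - (i:ℕ) by omega,
        Nat.cast_sub (le_of_lt ha)]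
  rw [Finset.prod_congr rfl fun i _ => h1 i,
    Fin.prod_univ_eq_prod_range (fun k => ((M - 1 - k).factorial : ℚ)) M]
  exact Finset.prod_range_reflect (fun k => ((k.factorial : ℚ))) M

lemma det_id (n m : ℕ) :
    (Matrix.of fun i j : Fin m =>
        if (j : ℕ) ≤ (i:ℕ) then ((n+1).choose ((i:ℕ) - (j : ℕ)) : ℚ) else 0).det = 1 := by
  rw [Matrix.det_of_lowerTriangular _ (fun i j hij => by
    rw [Matrix.of_apply, if_neg]
    have h2 : i < j := hij
    rw [Fin.lt_def] at h2
    omega)]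
  simp

lemma key (n m : ℕ) :
    (∏ i : Fin m, ((n+1).factorial : ℚ) /
        (((i:ℕ).factorial : ℚ) * ((n+m-(i:ℕ)).factorial : ℚ))) *
    ((∏ k ∈ Finset.range m, ((k.factorial:ℚ))) * (T n m).det) = 1 := by
  have h := (master n m (fun i => (i:ℕ)) (fun i => by
    show (i:ℕ) < n + m; have := i.isLt; omega)).symm.trans
    (det_id n m)
  rwa [vdm_id m] at h

lemma prodE (n m : ℕ) :
    (∏ i ∈ Finset.range m, (((n+m-i).factorial : ℚ))) *
      (∏ k ∈ Finset.range (n+1), ((k.factorial:ℚ)))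
    = ∏ k ∈ Finset.range (n+m+1), ((k.factorial:ℚ)) := by
  have h1 : (∏ i ∈ Finset.range m, (((n+m-i).factorial : ℚ)))
      = ∏ i ∈ Finset.range m, (((n+1+i).factorial : ℚ)) := by
    rw [← Finset.prod_range_reflect (fun i => (((n+1+i).factorial : ℚ))) m]
    refine Finset.prod_congr rfl fun i hi => ?_
    rw [Finset.mem_range] at hi
    congr 2
    omega
  rw [h1, show n+m+1 = (n+1)+m from by omega,
    Finset.prod_range_add (fun k => ((k.factorial:ℚ))) (n+1) m]
  ring

lemma SF_ne (M : ℕ) : (∏ k ∈ Finset.range M, ((k.factorial:ℚ))) ≠ 0 :=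
  Finset.prod_ne_zero_iff.2 fun k _ => Nat.cast_ne_zero.2 k.factorial_ne_zero

end Stmt8

/-- Closed-form evaluation of the determinant `det (C(n+1, b_i - j + 1))` (here in
0-based indexing: entry `C(n+1, b i - j)` when `j ≤ b i`, and `0` otherwise):
it equals `Δ(0,…,n+m)/Δ(0,…,n) * Δ(b)/∏ b_i!(n+m-b_i)!`. -/
theorem stmt_8 (n m : ℕ) (hm : 1 ≤ m) (b : Fin m → ℕ) (hb : StrictMono b)
    (hbd : ∀ i : Fin m, b i ≤ n + (i : ℕ)) :
    (Matrix.of fun i j : Fin m =>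
        if (j : ℕ) ≤ b i then ((n+1).choose (b i - (j : ℕ)) : ℚ) else 0).det =
      (∏ i : Fin (n+m+1), ∏ j ∈ Finset.Ioi i, (((j : ℕ) : ℚ) - ((i : ℕ) : ℚ))) /
      (∏ i : Fin (n+1), ∏ j ∈ Finset.Ioi i, (((j : ℕ) : ℚ) - ((i : ℕ) : ℚ))) *
      ((∏ i : Fin m, ∏ j ∈ Finset.Ioi i, ((b j : ℚ) - b i)) /
       ∏ i : Fin m, ((Nat.factorial (b i) : ℚ) * (Nat.factorial (n + m - b i) : ℚ))) := by
  have hb' : ∀ i : Fin m, b i < n + m := fun i => by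
    have h1 := i.isLt; have h2 := hbd i; omega
  rw [Stmt8.master n m b hb', Stmt8.vdm_id (n+m+1), Stmt8.vdm_id (n+1)]
  set c := (Stmt8.T n m).det with hc
  set E := ∏ i : Fin m, (((n+m-(i:ℕ)).factorial : ℚ)) with hE
  set D := ∏ i : Fin m, ((Nat.factorial (b i) : ℚ) * (Nat.factorial (n + m - b i) : ℚ)) with hD
  have hfac : ((n+1).factorial : ℚ) ≠ 0 := Nat.cast_ne_zero.2 (Nat.factorial_ne_zero _)
  have hEne : E ≠ 0 := Finset.prod_ne_zero_iff.2 fun k _ =>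
    Nat.cast_ne_zero.2 (Nat.factorial_ne_zero _)
  have hDne : D ≠ 0 := Finset.prod_ne_zero_iff.2 fun k _ =>
    mul_ne_zero (Nat.cast_ne_zero.2 (Nat.factorial_ne_zero _))
      (Nat.cast_ne_zero.2 (Nat.factorial_ne_zero _))
  -- compute prod of row factors at identity
  have hPid : (∏ i : Fin m, ((n+1).factorial : ℚ) /
        (((i:ℕ).factorial : ℚ) * ((n+m-(i:ℕ)).factorial : ℚ)))
      = ((n+1).factorial : ℚ)^m / ((∏ k ∈ Finset.range m, ((k.factorial:ℚ))) * E) := by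
    rw [Finset.prod_div_distrib, Finset.prod_const, Finset.card_univ, Fintype.card_fin,
      Finset.prod_mul_distrib, hE,
      Fin.prod_univ_eq_prod_range (fun k => ((k.factorial : ℚ))) m]
  have hkey := Stmt8.key n m
  rw [hPid] at hkey
  have hpow : ((n+1).factorial : ℚ)^m ≠ 0 := pow_ne_zero _ hfac
  have hSFm := Stmt8.SF_ne m
  rw [← hc] at hkey
  have hcval : c = E / ((n+1).factorial : ℚ)^m := by
    rw [eq_div_iff hpow]
    refine mul_left_cancel₀ hSFm ?_
    field_simp at hkey
    linear_combination (∏ k ∈ Finset.range m, ((k.factorial:ℚ))) * hkey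
  have hPb : (∏ i : Fin m, ((n+1).factorial : ℚ) /
        (((b i).factorial : ℚ) * ((n + m - b i).factorial : ℚ)))
      = ((n+1).factorial : ℚ)^m / D := by
    rw [Finset.prod_div_distrib, Finset.prod_const, Finset.card_univ, Fintype.card_fin, hD]
  rw [hPb, hcval]
  have hprodE : E * (∏ k ∈ Finset.range (n+1), ((k.factorial:ℚ)))
      = ∏ k ∈ Finset.range (n+m+1), ((k.factorial:ℚ)) := by
    rw [hE, Fin.prod_univ_eq_prod_range (fun i => (((n+m-i).factorial : ℚ))) m]
    exact Stmt8.prodE n m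
  rw [← hprodE]
  have hSF1 := Stmt8.SF_ne (n+1)
  field_simp
end

section
/- Let $0 = a_0 < \cdots < a_n$ be strictly increasing integers. For $\ell$ an integer with $n \leq \ell \leq a_n$, define $H_{n,\ell} = \frac{1}{U_{n,n}}\sum_{k : a_k \geq \ell} \frac{\prod_{s=0}^{n-1}(a_n - a_s)}{\prod_{s=0, s\neq k}^{n}(a_k - a_s)} \binom{a_k + n - \ell}{n}$ where $U_{n,n} = \frac{1}{n!}\prod_{s=0}^{n-1}(a_n - a_s)$, and define $\tilde H_{n,\ell} = \frac{n!}{\prod_{s=0}^{n-1}(a_n-a_s)}\sum_{k : a_k \leq \ell - n}\frac{\prod_{s=0}^{n-1}(a_n-a_s)}{n!\prod_{s=0,s\neq k}^{n}(a_k - a_s)}\prod_{s=0}^{n-1}(\ell - a_k - s)\cdot(-1)$, i.e. $\tilde H_{n,\ell} = -\sum_{k: a_k \leq \ell-n} \mathrm{Res}_{t=a_k}\left[\prod_{s=0}^n (a_s - t)^{-1}\prod_{s=0}^{n-1}(\ell - t - s)\right]$. Then for every integer $\ell$ with $n+1 \leq \ell$, one has $H_{n,\ell} + \tilde H_{n,\ell-1}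 = 1$. -/
open Polynomial Finset

lemma prod_neg'' {ι : Type*} (s : Finset ι) (g : ι → ℚ) :
    ∏ i ∈ s, (-g i) = (-1) ^ s.card * ∏ i ∈ s, g i := by
  rw [← Finset.prod_const, ← Finset.prod_mul_distrib]
  exact Finset.prod_congr rfl fun i _ => (neg_one_mul _).symm

/-- Sum of residues of `f(t)/∏(t - v k)` equals the leading coefficient when
`deg f + 1 = #nodes` and `f` is monic. -/
lemma sum_res {ι : Type*} [Fintype ι] [DecidableEq ι] (v : ι → ℚ) (hv : Function.Injective v)
    (f : ℚ[X]) (hf : f.Monic) (hd : f.natDegree + 1 = Fintype.card ι) :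
    ∑ k, f.eval (v k) / ∏ j ∈ Finset.univ.erase k, (v k - v j) = 1 := by
  have hinj : Set.InjOn v ↑(univ : Finset ι) := fun x _ y _ h => hv h
  have hcard : (univ : Finset ι).card = f.natDegree + 1 := by
    rw [Finset.card_univ, ← hd]
  have hdeg : f.degree < ((univ : Finset ι).card : ℕ) := by
    rw [hcard]
    exact lt_of_le_of_lt degree_le_natDegree (by exact_mod_cast Nat.lt_succ_self _)
  have heq := Lagrange.eq_interpolate (v := v) hinj hdeg
  have hc := congrArg (fun p => p.coeff f.natDegree) heq
  simp only [Lagrange.interpolate_apply, finset_sum_coeff, coeff_C_mul] at hc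
  rw [hf.coeff_natDegree] at hc
  have hb : ∀ k : ι, (Lagrange.basis univ v k).coeff f.natDegree
      = (∏ j ∈ univ.erase k, (v k - v j))⁻¹ := by
    intro k
    have hnd : (Lagrange.basis univ v k).natDegree = f.natDegree := by
      rw [Lagrange.natDegree_basis hinj (mem_univ k), hcard]
      simp
    rw [← hnd, ← leadingCoeff, Lagrange.basis, leadingCoeff_prod, ← prod_inv_distrib]
    refine prod_congr rfl fun j hj => ?_
    rw [Lagrange.basisDivisor, leadingCoeff_mul, leadingCoeff_C,
      (monic_X_sub_C (v j)).leadingCoeff, mul_one]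
  simp only [hb] at hc
  simp only [div_eq_mul_inv]
  exact hc.symm

/-- Sum rule `H_{n,ℓ} + H̃_{n,ℓ-1} = 1` for the two boundary one-point functions. -/
theorem stmt_9 (n : ℕ) (a : Fin (n+1) → ℕ) (h0 : a 0 = 0) (ha : StrictMono a)
    (ℓ : ℕ) (hℓ : n + 1 ≤ ℓ) :
    let H : ℕ → ℚ := fun l =>
      ∑ k ∈ Finset.univ.filter (fun k : Fin (n+1) => l ≤ a k),
        (Nat.factorial n : ℚ) * ((a k + n - l).choose n : ℚ) /
          ∏ s ∈ Finset.univ \ {k}, ((a k : ℚ) - a s)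
    let Ht : ℕ → ℚ := fun l =>
      ∑ k ∈ Finset.univ.filter (fun k : Fin (n+1) => a k + n ≤ l),
        (∏ s ∈ Finset.range n, ((l : ℚ) - (a k : ℚ) - (s : ℚ))) /
          ∏ s ∈ Finset.univ \ {k}, ((a s : ℚ) - a k)
    H ℓ + Ht (ℓ - 1) = 1 := by
  intro H Ht
  -- the node map
  set v : Fin (n+1) → ℚ := fun k => (a k : ℚ) with hv_def
  have hv : Function.Injective v := by
    intro i j h
    exact ha.injective (Nat.cast_injective h)
  -- the monic polynomial of degree n
  set f : ℚ[X] := ∏ s ∈ range n, (X - C ((ℓ : ℚ) - (s + 1))) with hf_def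
  have hf : f.Monic := monic_prod_of_monic _ _ fun s _ => monic_X_sub_C _
  have hfd : f.natDegree + 1 = Fintype.card (Fin (n+1)) := by
    rw [hf_def, natDegree_prod_of_monic _ _ fun s _ => monic_X_sub_C _]
    simp only [natDegree_X_sub_C]
    simp
  -- the residue function
  set R : Fin (n+1) → ℚ := fun k => f.eval (v k) / ∏ j ∈ univ.erase k, (v k - v j) with hR_def
  have hRsum : ∑ k, R k = 1 := sum_res v hv f hf hfd
  have heval : ∀ k, f.eval (v k) = ∏ s ∈ range n, ((a k : ℚ) - ℓ + (s + 1)) := by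
    intro k
    rw [hf_def, eval_prod]
    exact prod_congr rfl fun s _ => by rw [eval_sub, eval_X, eval_C]; ring
  have hsdiff : ∀ k : Fin (n+1), (univ \ {k} : Finset (Fin (n+1))) = univ.erase k := by
    intro k; rw [Finset.sdiff_singleton_eq_erase]
  -- H ℓ = sum of residues over {k : ℓ ≤ a k}
  have hH : H ℓ = ∑ k ∈ univ.filter (fun k => ℓ ≤ a k), R k := by
    refine Finset.sum_congr rfl fun k hk => ?_
    rw [mem_filter] at hk
    have hka : ℓ ≤ a k := hk.2
    simp only [hR_def]
    rw [heval k, hsdiff k]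
    congr 1
    -- numerator: n! * choose = descending product
    set m : ℕ := a k + n - ℓ with hm_def
    have hm : n ≤ m := by omega
    have hmc : (m : ℚ) = (a k : ℚ) + n - ℓ := by
      rw [hm_def, Nat.cast_sub (by omega)]
      push_cast; ring
    have h1 : (Nat.factorial n : ℚ) * ((m).choose n : ℚ)
        = ((m).descFactorial n : ℚ) := by
      rw [Nat.descFactorial_eq_factorial_mul_choose]; push_cast; ring
    rw [h1, Nat.descFactorial_eq_prod_range, Nat.cast_prod]
    have h2 : ∀ t ∈ range n, ((m - t : ℕ) : ℚ) = (m : ℚ) - t := fun t ht =>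
      Nat.cast_sub (le_trans (le_of_lt (mem_range.mp ht)) hm)
    rw [Finset.prod_congr rfl h2, ← Finset.prod_range_reflect]
    refine Finset.prod_congr rfl fun j hj => ?_
    rw [mem_range] at hj
    have h3 : ((n - 1 - j : ℕ) : ℚ) = (n : ℚ) - 1 - j := by
      rw [Nat.cast_sub (by omega), Nat.cast_sub (by omega)]
      push_cast; ring
    rw [h3, hmc]
    push_cast
    ring
  -- Ht (ℓ-1) = sum of residues over {k : a k + n ≤ ℓ - 1}
  have hHt : Ht (ℓ - 1) = ∑ k ∈ univ.filter (fun k => a k + n ≤ ℓ - 1), R k := by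
    refine Finset.sum_congr rfl fun k hk => ?_
    rw [mem_filter] at hk
    simp only [hR_def]
    rw [heval k, hsdiff k]
    have hl1 : ((ℓ - 1 : ℕ) : ℚ) = (ℓ : ℚ) - 1 := by
      rw [Nat.cast_sub (by omega)]; norm_num
    have hcard' : (univ.erase k).card = n := by
      rw [Finset.card_erase_of_mem (mem_univ k), Finset.card_univ, Fintype.card_fin]
      simp
    have hnum : ∏ s ∈ range n, (((ℓ - 1 : ℕ) : ℚ) - (a k : ℚ) - s)
        = (-1) ^ n * ∏ s ∈ range n, ((a k : ℚ) - ℓ + (s + 1)) := by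
      have he : ∀ s ∈ range n, ((ℓ - 1 : ℕ) : ℚ) - (a k : ℚ) - s
          = -((a k : ℚ) - ℓ + (s + 1)) := fun s _ => by rw [hl1]; ring
      rw [Finset.prod_congr rfl he, prod_neg'', card_range]
    have hden : ∏ j ∈ univ.erase k, ((a j : ℚ) - a k)
        = (-1) ^ n * ∏ j ∈ univ.erase k, ((a k : ℚ) - a j) := by
      have he : ∀ j ∈ univ.erase k, ((a j : ℚ) - a k)
          = -((a k : ℚ) - a j) := fun j _ => by ring
      rw [Finset.prod_congr rfl he, prod_neg'', hcard']
    rw [hnum, hden, mul_div_mul_left]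
    exact pow_ne_zero _ (by norm_num)
  -- complement terms vanish; combine
  have hdisj : Disjoint (univ.filter (fun k : Fin (n+1) => ℓ ≤ a k))
      (univ.filter (fun k : Fin (n+1) => a k + n ≤ ℓ - 1)) := by
    rw [Finset.disjoint_filter]
    intro k _ h1 h2
    omega
  have hzero : ∀ k ∉ (univ.filter (fun k : Fin (n+1) => ℓ ≤ a k))
      ∪ (univ.filter (fun k : Fin (n+1) => a k + n ≤ ℓ - 1)), R k = 0 := by
    intro k hk
    rw [Finset.mem_union, mem_filter, mem_filter] at hk
    push_neg at hk
    have h1 : a k < ℓ := hk.1 (mem_univ k)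
    have h2 : ℓ - 1 < a k + n := hk.2 (mem_univ k)
    simp only [hR_def]
    rw [heval k]
    have hzf : ((a k : ℚ) - ℓ + ((ℓ - a k - 1 : ℕ) + 1)) = 0 := by
      rw [Nat.cast_sub (by omega), Nat.cast_sub (by omega)]
      push_cast; ring
    rw [Finset.prod_eq_zero (Finset.mem_range.mpr (show ℓ - a k - 1 < n by omega)) hzf,
      zero_div]
  calc H ℓ + Ht (ℓ - 1)
      = ∑ k ∈ (univ.filter (fun k : Fin (n+1) => ℓ ≤ a k))
          ∪ (univ.filter (fun k : Fin (n+1) => a k + n ≤ ℓ - 1)), R k := by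
        rw [hH, hHt, Finset.sum_union hdisj]
    _ = ∑ k, R k := by
        refine Finset.sum_subset (Finset.subset_univ _) ?_
        intro k _ hk
        exact hzero k hk
    _ = 1 := hRsum
end

section
/- Let $n, m \geq 1$ and let $b_1 < \cdots < b_m$ be strictly increasing nonnegative integers with $b_i \leq n+i-1$ for all $i$. Define the lower triangular $m \times m$ matrix $\hat M$ by $\hat M_{i,j} = \frac{\binom{n+m}{b_i}\binom{n+m-b_i}{m+1-i}}{\binom{n+m}{b_j}\binom{n+m-b_j}{m+1-i}} \cdot \frac{\prod_{s=1}^{i-1}(b_i - b_s)}{\prod_{s=1, s \neq j}^{i}(b_j - b_s)}$ for $i \geq j$, and $\hat M_{i,j}=0$ for $i<j$. Then $\hat M$ is lower uni-triangular and $\hat U = \hat M \hat A$ is upper triangular, where $\hat A_{i,j} = \binom{n+1}{b_i - j + 1}$; moreover the diagonal entries are $\hat U_{i,i} = \binom{n+i}{b_i}\prod_{s=1}^{i-1}\frac{b_i - b_s}{n + i - b_s}$. -/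
open Polynomial Finset

lemma leadingCoeff_lbasis {F : Type*} [Field F] {ι : Type*} [DecidableEq ι] (s : Finset ι) (v : ι → F)
    (hvs : Set.InjOn v s) (i : ι) (hi : i ∈ s) :
    (Lagrange.basis s v i).leadingCoeff = ∏ j ∈ s.erase i, (v i - v j)⁻¹ := by
  rw [Lagrange.basis, leadingCoeff_prod]
  exact Finset.prod_congr rfl fun j _ => by
    rw [Lagrange.basisDivisor, leadingCoeff_mul, leadingCoeff_C, leadingCoeff_X_sub_C, mul_one]

lemma dd_core {F : Type*} [Field F] {ι : Type*} [DecidableEq ι] (s : Finset ι) (v : ι → F)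
    (hvs : Set.InjOn v s) (p : F[X]) (hp : p.degree < s.card) :
    ∑ i ∈ s, p.eval (v i) * ∏ j ∈ s.erase i, (v i - v j)⁻¹ = p.coeff (s.card - 1) := by
  conv_rhs => rw [Lagrange.eq_interpolate hvs hp]
  rw [Lagrange.interpolate_apply, finset_sum_coeff]
  refine Finset.sum_congr rfl fun i hi => ?_
  rw [coeff_C_mul]
  congr 1
  have hd := Lagrange.natDegree_basis hvs hi
  rw [← hd, coeff_natDegree, leadingCoeff_lbasis s v hvs i hi]

lemma dd_extra {F : Type*} [Field F] (N : ℕ) (v : ℕ → F) (hv : Set.InjOn v (range (N+1)))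
    (a : F) (ha : ∀ k < N+1, v k ≠ a) (p : F[X]) (hp : p.degree < N + 1) :
    ∑ k ∈ range (N+1), p.eval (v k) * ((a - v k)⁻¹ * ∏ l ∈ (range (N+1)).erase k, (v k - v l)⁻¹)
      = p.eval a * ∏ k ∈ range (N+1), (a - v k)⁻¹ := by
  set w : ℕ → F := fun k => if k < N+1 then v k else a with hw
  have hwv : ∀ k < N+1, w k = v k := fun k hk => by simp only [hw]; exact if_pos hk
  have hwa : ∀ k, ¬ (k < N+1) → w k = a := fun k hk => by simp only [hw]; exact if_neg hk
  have hinj : Set.InjOn w (range (N+2)) := by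
    intro x hx y hy hxy
    simp only [coe_range, Set.mem_Iio] at hx hy
    by_cases hx1 : x < N+1 <;> by_cases hy1 : y < N+1
    · exact hv (by simpa using hx1) (by simpa using hy1) (by rwa [hwv x hx1, hwv y hy1] at hxy)
    · exact absurd (by rwa [hwv x hx1, hwa y hy1] at hxy) (ha x hx1)
    · exact absurd ((show a = v y by rwa [hwa x hx1, hwv y hy1] at hxy)).symm (ha y hy1)
    · omega
  have hp2 : p.degree < (range (N+2)).card := by
    rw [card_range]; exact lt_trans hp (by exact_mod_cast Nat.lt_succ_self (N+1))
  have hcoeff : p.coeff ((range (N+2)).card - 1) = 0 := by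
    rw [card_range]
    exact coeff_eq_zero_of_degree_lt (by exact_mod_cast hp)
  have h0 := dd_core (range (N+2)) w hinj p hp2
  rw [hcoeff] at h0
  rw [Finset.sum_range_succ] at h0
  have hNerase : (range (N+2)).erase (N+1) = range (N+1) := by
    rw [Finset.range_add_one, Finset.erase_insert (by simp)]
  have hlast : p.eval (w (N+1)) * ∏ j ∈ (range (N+2)).erase (N+1), (w (N+1) - w j)⁻¹
      = p.eval a * ∏ k ∈ range (N+1), (a - v k)⁻¹ := by
    rw [hNerase, hwa (N+1) (by omega)]
    congr 1
    exact Finset.prod_congr rfl fun l hl => by rw [hwv l (mem_range.mp hl)]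
  have hterm : ∀ k ∈ range (N+1),
      p.eval (w k) * ∏ j ∈ (range (N+2)).erase k, (w k - w j)⁻¹
      = - (p.eval (v k) * ((a - v k)⁻¹ * ∏ l ∈ (range (N+1)).erase k, (v k - v l)⁻¹)) := by
    intro k hk
    have hk1 := mem_range.mp hk
    have hsplit : (range (N+2)).erase k = insert (N+1) ((range (N+1)).erase k) := by
      rw [Finset.range_add_one, Finset.erase_insert_of_ne (by omega)]
    rw [hsplit, Finset.prod_insert (by simp), hwv k hk1, hwa (N+1) (by omega)]
    have : ∏ j ∈ (range (N+1)).erase k, (v k - w j)⁻¹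
        = ∏ l ∈ (range (N+1)).erase k, (v k - v l)⁻¹ :=
      Finset.prod_congr rfl fun l hl => by rw [hwv l (mem_range.mp (mem_of_mem_erase hl))]
    rw [this]
    have h3 : (v k - a)⁻¹ = -(a - v k)⁻¹ := by rw [← neg_sub a (v k), inv_neg]
    rw [h3]; ring
  rw [Finset.sum_congr rfl hterm, Finset.sum_neg_distrib, hlast] at h0
  linear_combination -h0

lemma prod_fin_nat {m : ℕ} (S : Finset (Fin m)) (T : Finset ℕ)
    (hST : ∀ s : Fin m, s ∈ S ↔ (s : ℕ) ∈ T) (hT : ∀ k ∈ T, k < m)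
    (F : Fin m → ℚ) (G : ℕ → ℚ) (hFG : ∀ (k : ℕ) (h : k < m), k ∈ T → G k = F ⟨k, h⟩) :
    ∏ s ∈ S, F s = ∏ k ∈ T, G k := by
  refine Finset.prod_bij (fun s _ => (s : ℕ)) ?_ ?_ ?_ ?_
  · intro a ha; exact (hST a).mp ha
  · intro a₁ h₁ a₂ h₂ h; exact Fin.val_injective h
  · intro k hk; exact ⟨⟨k, hT k hk⟩, (hST _).mpr (by simpa using hk), rfl⟩
  · intro a ha; exact (hFG a a.isLt ((hST a).mp ha)).symm

noncomputable def Ppoly (n I J : ℕ) : ℚ[X] :=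
  (∏ t ∈ range J, (X - C (t : ℚ))) * (∏ t ∈ range (I - J), (C ((n:ℚ) + I + 1 - t) - X))

lemma Ppoly_eval (n I J : ℕ) (x : ℚ) :
    (Ppoly n I J).eval x
      = (∏ t ∈ range J, (x - t)) * ∏ t ∈ range (I - J), ((n:ℚ) + I + 1 - t - x) := by
  simp [Ppoly, eval_prod]

lemma Ppoly_degree (n I J : ℕ) (hJ : J ≤ I) : (Ppoly n I J).degree < (I : WithBot ℕ) + 1 := by
  have h1 : ∀ t : ℚ, (C t - X : ℚ[X]) = -(X - C t) := fun t => by ring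
  have hne : Ppoly n I J ≠ 0 := by
    apply mul_ne_zero <;> apply Finset.prod_ne_zero_iff.mpr <;> intro t _
    · exact X_sub_C_ne_zero _
    · rw [h1]; exact neg_ne_zero.mpr (X_sub_C_ne_zero _)
  have hdeg : (Ppoly n I J).natDegree = I := by
    rw [Ppoly, natDegree_mul (by
        apply Finset.prod_ne_zero_iff.mpr; intro t _; exact X_sub_C_ne_zero _)
      (by apply Finset.prod_ne_zero_iff.mpr; intro t _; rw [h1]
          exact neg_ne_zero.mpr (X_sub_C_ne_zero _)),
      natDegree_prod _ _ (fun t _ => X_sub_C_ne_zero _),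
      natDegree_prod _ _ (fun t _ => by rw [h1]; exact neg_ne_zero.mpr (X_sub_C_ne_zero _))]
    simp only [natDegree_X_sub_C]
    have : ∀ t ∈ range (I-J), ((C ((n:ℚ) + I + 1 - t) - X).natDegree) = 1 := fun t _ => by
      rw [h1, natDegree_neg, natDegree_X_sub_C]
    rw [Finset.sum_congr rfl this]
    simp
    omega
  rw [degree_eq_natDegree hne, hdeg]
  exact_mod_cast Nat.lt_succ_self I

lemma diag_id (n m I β : ℕ) (hIm : I < m) (hβ : β ≤ n + I) :
    ((n+m).choose β : ℚ) * ((n+m-β).choose (m-I) : ℚ) *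
      ((((n+1).factorial : ℚ) * ((m-I).factorial : ℚ)) / ((n+m).factorial : ℚ)) *
      (∏ t ∈ range I, ((n:ℚ) + I + 1 - t))
    = ((n+I+1).choose β : ℚ) * ((n:ℚ) + I + 1 - β) := by
  have hD : (∏ t ∈ range I, ((n:ℚ) + I + 1 - t))
      = ((n+I+1).descFactorial I : ℚ) := by
    rw [Nat.descFactorial_eq_prod_range, Nat.cast_prod]
    refine Finset.prod_congr rfl fun t ht => ?_
    have ht' := mem_range.mp ht
    rw [Nat.cast_sub (by omega)]
    push_cast; ring
  have hD2 : ((n+I+1).descFactorial I : ℚ)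
      = ((n+I+1).factorial : ℚ) / ((n+1).factorial : ℚ) := by
    rw [eq_div_iff (by exact_mod_cast Nat.factorial_ne_zero _)]
    have := Nat.factorial_mul_descFactorial (by omega : I ≤ n+I+1)
    have h' : (n+I+1) - I = n+1 := by omega
    rw [h'] at this
    exact_mod_cast congrArg (Nat.cast (R := ℚ)) (by rw [mul_comm]; exact this)
  have h1 : ((n+m).choose β : ℚ)
      = ((n+m).factorial : ℚ) / ((β.factorial : ℚ) * ((n+m-β).factorial : ℚ)) := by
    rw [Nat.cast_choose ℚ (by omega)]
  have h2 : ((n+m-β).choose (m-I) : ℚ)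
      = ((n+m-β).factorial : ℚ) / (((m-I).factorial : ℚ) * ((n+I-β).factorial : ℚ)) := by
    rw [Nat.cast_choose ℚ (by omega : m - I ≤ n+m-β),
      show (n+m-β)-(m-I) = n+I-β from by omega]
  have h3 : ((n+I+1).choose β : ℚ)
      = ((n+I+1).factorial : ℚ) / ((β.factorial : ℚ) * ((n+I+1-β).factorial : ℚ)) := by
    rw [Nat.cast_choose ℚ (by omega : β ≤ n+I+1)]
  have h4 : ((n+I+1-β).factorial : ℚ) = ((n:ℚ)+I+1-β) * ((n+I-β).factorial : ℚ) := by
    rw [show n+I+1-β = (n+I-β)+1 from by omega, Nat.factorial_succ]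
    push_cast
    rw [Nat.cast_sub (by omega : β ≤ n+I)]
    push_cast; ring
  rw [hD, hD2, h1, h2, h3, h4]
  have e1 : (β.factorial : ℚ) ≠ 0 := by exact_mod_cast Nat.factorial_ne_zero _
  have e2 : ((n+m-β).factorial : ℚ) ≠ 0 := by exact_mod_cast Nat.factorial_ne_zero _
  have e3 : ((m-I).factorial : ℚ) ≠ 0 := by exact_mod_cast Nat.factorial_ne_zero _
  have e4 : ((n+I-β).factorial : ℚ) ≠ 0 := by exact_mod_cast Nat.factorial_ne_zero _
  have e5 : ((n+1).factorial : ℚ) ≠ 0 := by exact_mod_cast Nat.factorial_ne_zero _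
  have e6 : ((n+m).factorial : ℚ) ≠ 0 := by exact_mod_cast Nat.factorial_ne_zero _
  have e7 : ((n:ℚ)+I+1-(β:ℚ)) ≠ 0 := by
    have : (β:ℚ) < (n:ℚ)+(I:ℚ)+1 := by exact_mod_cast (by omega : β < n+I+1)
    intro h; linarith
  field_simp

lemma entry_id (n m I J x : ℕ) (hIm : I < m) (hJI : J ≤ I) (hx : x ≤ n + I) :
    (if J ≤ x then ((n+1).choose (x - J) : ℚ) else 0) * ((n+m).factorial : ℚ) * ((n:ℚ) + I + 1 - x)
    = ((n+m).choose x : ℚ) * ((n+m-x).choose (m-I) : ℚ) *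
      ((∏ t ∈ range J, ((x:ℚ) - t)) * (∏ t ∈ range (I-J), ((n:ℚ) + I + 1 - t - x))) *
      (((n+1).factorial : ℚ) * ((m-I).factorial : ℚ)) := by
  rcases lt_or_ge x J with hxJ | hxJ
  · rw [if_neg (by omega)]
    have : (∏ t ∈ range J, ((x:ℚ) - t)) = 0 :=
      Finset.prod_eq_zero (mem_range.mpr hxJ) (by ring)
    rw [this]; ring
  rcases lt_or_ge (n+1+J) x with hbig | hsm
  · rw [if_pos hxJ, Nat.choose_eq_zero_of_lt (by omega)]
    have hmem : n+I+1-x ∈ range (I-J) := mem_range.mpr (by omega)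
    have : (∏ t ∈ range (I-J), ((n:ℚ) + I + 1 - t - x)) = 0 := by
      refine Finset.prod_eq_zero hmem ?_
      have : ((n+I+1-x : ℕ) : ℚ) = (n:ℚ) + I + 1 - x := by
        rw [Nat.cast_sub (by omega)]; push_cast; ring
      rw [this]; ring
    rw [this]; push_cast; ring
  · -- main case: J ≤ x ≤ n+1+J
    have hP1 : (∏ t ∈ range J, ((x:ℚ) - t)) = (x.descFactorial J : ℚ) := by
      rw [Nat.descFactorial_eq_prod_range, Nat.cast_prod]
      refine Finset.prod_congr rfl fun t ht => ?_
      have ht' := mem_range.mp ht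
      rw [Nat.cast_sub (by omega : t ≤ x)]
    have hP2 : (∏ t ∈ range (I-J), ((n:ℚ) + I + 1 - t - x))
        = ((n+I+1-x).descFactorial (I-J) : ℚ) := by
      rw [Nat.descFactorial_eq_prod_range, Nat.cast_prod]
      refine Finset.prod_congr rfl fun t ht => ?_
      have ht' := mem_range.mp ht
      rw [Nat.cast_sub (by omega), Nat.cast_sub (by omega)]
      push_cast; ring
    have h1 : ((n+m).choose x : ℚ)
        = ((n+m).factorial : ℚ) / (((x).factorial : ℚ) * ((n+m-x).factorial : ℚ)) := by
      rw [Nat.cast_choose ℚ (by omega)]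
    have h2 : ((n+m-x).choose (m-I) : ℚ)
        = ((n+m-x).factorial : ℚ) / (((m-I).factorial : ℚ) * ((n+I-x).factorial : ℚ)) := by
      rw [Nat.cast_choose ℚ (by omega : m - I ≤ n+m-x),
        show (n+m-x)-(m-I) = n+I-x from by omega]
    have h3 : ((n+1).choose (x-J) : ℚ)
        = ((n+1).factorial : ℚ) / (((x-J).factorial : ℚ) * ((n+1+J-x).factorial : ℚ)) := by
      rw [Nat.cast_choose ℚ (by omega : x - J ≤ n+1),
        show (n+1)-(x-J) = n+1+J-x from by omega]
    have h4 : (x.descFactorial J : ℚ) = ((x).factorial : ℚ) / ((x-J).factorial : ℚ) := by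
      rw [eq_div_iff (by exact_mod_cast (Nat.factorial_ne_zero _))]
      exact_mod_cast congrArg (Nat.cast (R := ℚ)) (by rw [mul_comm]; exact Nat.factorial_mul_descFactorial hxJ)
    have h5 : ((n+I+1-x).descFactorial (I-J) : ℚ)
        = ((n+I+1-x).factorial : ℚ) / ((n+1+J-x).factorial : ℚ) := by
      rw [eq_div_iff (by exact_mod_cast (Nat.factorial_ne_zero _))]
      have := Nat.factorial_mul_descFactorial (by omega : I - J ≤ n+I+1-x)
      have h' : (n+I+1-x) - (I-J) = n+1+J-x := by omega
      rw [h'] at this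
      exact_mod_cast congrArg (Nat.cast (R := ℚ)) (by rw [mul_comm]; exact this)
    have h6 : ((n+I+1-x).factorial : ℚ) = ((n:ℚ)+I+1-x) * ((n+I-x).factorial : ℚ) := by
      have h' : n+I+1-x = (n+I-x)+1 := by omega
      rw [h', Nat.factorial_succ]
      push_cast
      rw [Nat.cast_sub (by omega : x ≤ n+I)]
      push_cast; ring
    rw [if_pos hxJ, hP1, hP2, h1, h2, h3, h4, h5, h6]
    have e1 : ((x).factorial : ℚ) ≠ 0 := by exact_mod_cast Nat.factorial_ne_zero _
    have e2 : ((n+m-x).factorial : ℚ) ≠ 0 := by exact_mod_cast Nat.factorial_ne_zero _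
    have e3 : ((m-I).factorial : ℚ) ≠ 0 := by exact_mod_cast Nat.factorial_ne_zero _
    have e4 : ((n+I-x).factorial : ℚ) ≠ 0 := by exact_mod_cast Nat.factorial_ne_zero _
    have e5 : ((x-J).factorial : ℚ) ≠ 0 := by exact_mod_cast Nat.factorial_ne_zero _
    have e6 : ((n+1+J-x).factorial : ℚ) ≠ 0 := by exact_mod_cast Nat.factorial_ne_zero _
    field_simp
lemma AE_eq (n m I J x : ℕ) (hIm : I < m) (hJI : J ≤ I) (hx : x ≤ n + I) :
    (if J ≤ x then ((n+1).choose (x - J) : ℚ) else 0)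
    = (((n+m).choose x : ℚ) * ((n+m - x).choose (m - I) : ℚ))
      * (((((n+1).factorial : ℚ) * ((m - I).factorial : ℚ)) / ((n+m).factorial : ℚ))
        * ((Ppoly n I J).eval (x : ℚ) * (((n:ℚ) + I + 1) - (x : ℚ))⁻¹)) := by
  have ent := entry_id n m I J x hIm hJI hx
  have hax : ((n:ℚ) + I + 1) - (x : ℚ) ≠ 0 := by
    have : (x : ℚ) < (n:ℚ) + I + 1 := by exact_mod_cast (show x < n + I + 1 by omega)
    intro h; linarith
  have hFa : ((n+m).factorial : ℚ) ≠ 0 := by exact_mod_cast Nat.factorial_ne_zero _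
  rw [Ppoly_eval]
  set AE : ℚ := (if J ≤ x then ((n+1).choose (x - J) : ℚ) else 0) with hAE
  field_simp
  linear_combination ent

/-- Explicit LU decomposition of the LGV matrix `Â i j = C(n+1, b_i - j + 1)`
(0-based: entry `C(n+1, b i - j)` when `j ≤ b i`, else `0`): the explicit lower
uni-triangular matrix `M̂` makes `Û = M̂ Â` upper triangular with diagonal
`Û i i = C(n+i, b_i) ∏_{s<i} (b_i - b_s)/(n+i-b_s)` (stated here 0-based). -/
theorem stmt_12 (n m : ℕ) (hn : 1 ≤ n) (hm : 1 ≤ m) (b : Fin m → ℕ) (hb : StrictMono b)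
    (hbd : ∀ i : Fin m, b i ≤ n + (i : ℕ)) :
    let M : Matrix (Fin m) (Fin m) ℚ := Matrix.of fun i j =>
      if j ≤ i then
        (((n+m).choose (b i) : ℚ) * ((n + m - b i).choose (m - (i : ℕ)) : ℚ)) /
          (((n+m).choose (b j) : ℚ) * ((n + m - b j).choose (m - (i : ℕ)) : ℚ)) *
        ((∏ s ∈ Finset.Iio i, ((b i : ℚ) - b s)) /
         (∏ s ∈ Finset.Iic i \ {j}, ((b j : ℚ) - b s)))
      else 0
    let A : Matrix (Fin m) (Fin m) ℚ := Matrix.of fun i j =>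
      if (j : ℕ) ≤ b i then ((n+1).choose (b i - (j : ℕ)) : ℚ) else 0
    (∀ i, M i i = 1) ∧
    (∀ i j, j < i → (M * A) i j = 0) ∧
    (∀ i, (M * A) i i = ((n + (i : ℕ) + 1).choose (b i) : ℚ) *
      ∏ s ∈ Finset.Iio i, (((b i : ℚ) - b s) / ((n : ℚ) + (i : ℕ) + 1 - b s))) := by
  intro M A
  have hM : ∀ i j : Fin m, M i j =
      if j ≤ i then
        (((n+m).choose (b i) : ℚ) * ((n + m - b i).choose (m - (i : ℕ)) : ℚ)) /
          (((n+m).choose (b j) : ℚ) * ((n + m - b j).choose (m - (i : ℕ)) : ℚ)) *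
        ((∏ s ∈ Finset.Iio i, ((b i : ℚ) - b s)) /
         (∏ s ∈ Finset.Iic i \ {j}, ((b j : ℚ) - b s)))
      else 0 := fun i j => rfl
  have hA : ∀ i j : Fin m, A i j =
      if (j : ℕ) ≤ b i then ((n+1).choose (b i - (j : ℕ)) : ℚ) else 0 := fun i j => rfl
  set v : ℕ → ℚ := fun k => if h : k < m then (b ⟨k, h⟩ : ℚ) else 0 with hv
  have hvk : ∀ (k : ℕ) (h : k < m), v k = (b ⟨k, h⟩ : ℚ) := fun k h => by
    simp only [hv]; exact dif_pos h
  have hC1 : ∀ x : ℕ, x ≤ n + m → ((n+m).choose x : ℚ) ≠ 0 := fun x hx =>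
    Nat.cast_ne_zero.mpr (Nat.choose_pos hx).ne'
  have hC2 : ∀ (x I : ℕ), I < m → x ≤ n + I → ((n+m-x).choose (m - I) : ℚ) ≠ 0 :=
    fun x I hI hx => Nat.cast_ne_zero.mpr (Nat.choose_pos (by omega)).ne'
  have key : ∀ i j : Fin m, j ≤ i → (M * A) i j =
      (((n+m).choose (b i) : ℚ) * ((n + m - b i).choose (m - (i : ℕ)) : ℚ))
      * (∏ s ∈ Finset.range (i : ℕ), ((b i : ℚ) - v s))
      * ((((n+1).factorial : ℚ) * ((m - (i : ℕ)).factorial : ℚ)) / ((n+m).factorial : ℚ))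
      * ((Ppoly n (i : ℕ) (j : ℕ)).eval ((n : ℚ) + (i : ℕ) + 1)
        * ∏ k ∈ Finset.range ((i : ℕ) + 1), (((n : ℚ) + (i : ℕ) + 1) - v k)⁻¹) := by
    intro i j hij
    have hIm : (i : ℕ) < m := i.isLt
    have hJI : (j : ℕ) ≤ (i : ℕ) := hij
    set f : ℕ → ℚ := fun k => if h : k < m then M i ⟨k, h⟩ * A ⟨k, h⟩ j else 0 with hf
    have h1 : (M * A) i j = ∑ k ∈ Finset.range m, f k := by
      rw [Matrix.mul_apply, ← Fin.sum_univ_eq_sum_range]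
      exact Finset.sum_congr rfl fun k _ => by simp [hf, k.isLt]
    have h2 : ∑ k ∈ Finset.range m, f k = ∑ k ∈ Finset.range ((i : ℕ)+1), f k := by
      symm
      apply Finset.sum_subset
      · intro k hk; simp only [Finset.mem_range] at hk ⊢; omega
      · intro k hk hk'
        simp only [Finset.mem_range] at hk hk'
        simp only [hf]
        rw [dif_pos hk, hM, if_neg (by rw [Fin.le_def]; simp; omega), zero_mul]
    have hterm : ∀ k ∈ Finset.range ((i : ℕ)+1), f k =
        (((n+m).choose (b i) : ℚ) * ((n + m - b i).choose (m - (i : ℕ)) : ℚ))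
        * (∏ s ∈ Finset.range (i : ℕ), ((b i : ℚ) - v s))
        * ((((n+1).factorial : ℚ) * ((m - (i : ℕ)).factorial : ℚ)) / ((n+m).factorial : ℚ))
        * ((Ppoly n (i : ℕ) (j : ℕ)).eval (v k)
          * ((((n : ℚ) + (i : ℕ) + 1) - v k)⁻¹
            * ∏ l ∈ (Finset.range ((i : ℕ)+1)).erase k, (v k - v l)⁻¹)) := by
      intro k hk
      have hkI : k ≤ (i : ℕ) := by simpa [Nat.lt_succ_iff] using hk
      have hkm : k < m := lt_of_le_of_lt hkI hIm
      simp only [hf]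
      rw [dif_pos hkm, hM, if_pos (show (⟨k, hkm⟩ : Fin m) ≤ i from by
        rw [Fin.le_def]; exact hkI), hA]
      have hxle : b ⟨k, hkm⟩ ≤ n + (i : ℕ) := le_trans (hbd ⟨k, hkm⟩) (by simp; omega)
      have hp1 : (∏ s ∈ Finset.Iio i, ((b i : ℚ) - b s))
          = ∏ s ∈ Finset.range (i : ℕ), ((b i : ℚ) - v s) :=
        prod_fin_nat _ _
          (fun s => by rw [Finset.mem_Iio, Finset.mem_range, Fin.lt_def])
          (fun s hs => lt_trans (Finset.mem_range.mp hs) hIm)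
          _ _ (fun s h hs => by rw [hvk s h])
      have hp2 : (∏ s ∈ Finset.Iic i \ {(⟨k, hkm⟩ : Fin m)}, ((b ⟨k, hkm⟩ : ℚ) - b s))
          = ∏ l ∈ (Finset.range ((i : ℕ)+1)).erase k, ((b ⟨k, hkm⟩ : ℚ) - v l) := by
        refine prod_fin_nat _ _
          (fun s => by
            simp only [Finset.mem_sdiff, Finset.mem_Iic, Finset.mem_singleton,
              Finset.mem_erase, Finset.mem_range, Fin.le_def, Fin.ext_iff, Nat.lt_succ_iff]
            tauto)
          (fun l hl => by
            have := (Finset.mem_erase.mp hl).2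
            simp only [Finset.mem_range] at this; omega)
          _ _ (fun l h hl => by rw [hvk l h])
      have hDk : (∏ l ∈ (Finset.range ((i : ℕ)+1)).erase k, ((b ⟨k, hkm⟩ : ℚ) - v l)) ≠ 0 := by
        apply Finset.prod_ne_zero_iff.mpr
        intro l hl
        have hlk := (Finset.mem_erase.mp hl).1
        have hlI : l < (i : ℕ) + 1 := Finset.mem_range.mp (Finset.mem_erase.mp hl).2
        have hlm : l < m := by omega
        rw [hvk l hlm]
        have hne : b ⟨k, hkm⟩ ≠ b ⟨l, hlm⟩ := by
          intro h
          have h3 : k = l := by simpa [Fin.ext_iff] using hb.injective h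
          exact hlk h3.symm
        intro h
        exact hne (by exact_mod_cast sub_eq_zero.mp h)
      have hax : ((n:ℚ) + (i : ℕ) + 1) - ((b ⟨k, hkm⟩ : ℕ) : ℚ) ≠ 0 := by
        have : ((b ⟨k, hkm⟩ : ℕ) : ℚ) < (n:ℚ) + (i : ℕ) + 1 := by
          exact_mod_cast (show b ⟨k, hkm⟩ < n + (i : ℕ) + 1 by omega)
        intro h; linarith
      have hFa : ((n+m).factorial : ℚ) ≠ 0 := by exact_mod_cast Nat.factorial_ne_zero _
      have hc1 := hC1 (b ⟨k, hkm⟩) (by omega)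
      have hc2 := hC2 (b ⟨k, hkm⟩) (i : ℕ) hIm hxle
      rw [hvk k hkm, hp1, hp2, AE_eq n m (i : ℕ) (j : ℕ) (b ⟨k, hkm⟩) hIm hJI hxle,
        Finset.prod_inv_distrib]
      field_simp
    rw [h1, h2, Finset.sum_congr rfl hterm, ← Finset.mul_sum]
    have hinj : Set.InjOn v ↑(Finset.range ((i : ℕ)+1)) := by
      intro x hx y hy hxy
      simp only [Finset.coe_range, Set.mem_Iio] at hx hy
      have hxm : x < m := by omega
      have hym : y < m := by omega
      rw [hvk x hxm, hvk y hym] at hxy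
      have hbe : b ⟨x, hxm⟩ = b ⟨y, hym⟩ := by exact_mod_cast hxy
      have := hb.injective hbe
      simpa [Fin.ext_iff] using this
    have hane : ∀ k < (i : ℕ) + 1, v k ≠ (n : ℚ) + (i : ℕ) + 1 := by
      intro k hk
      have hkm : k < m := by omega
      rw [hvk k hkm]
      have h1 : b ⟨k, hkm⟩ ≤ n + (i : ℕ) := le_trans (hbd ⟨k, hkm⟩) (by simp; omega)
      have : ((b ⟨k, hkm⟩ : ℕ) : ℚ) < (n : ℚ) + (i : ℕ) + 1 := by
        exact_mod_cast (show b ⟨k, hkm⟩ < n + (i : ℕ) + 1 by omega)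
      intro h; rw [h] at this; linarith
    rw [dd_extra (i : ℕ) v hinj ((n : ℚ) + (i : ℕ) + 1) hane (Ppoly n (i : ℕ) (j : ℕ))
      (Ppoly_degree n (i : ℕ) (j : ℕ) hJI)]
  refine ⟨?_, ?_, ?_⟩
  · intro i
    rw [hM, if_pos le_rfl]
    have hd : Finset.Iic i \ {i} = Finset.Iio i := by
      ext s
      simp [Finset.mem_Iio, Finset.mem_Iic, lt_iff_le_and_ne]
    rw [hd]
    have h1 : (((n+m).choose (b i) : ℚ) * ((n + m - b i).choose (m - (i : ℕ)) : ℚ)) ≠ 0 :=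
      mul_ne_zero (hC1 _ (by have := hbd i; have := i.isLt; omega))
        (hC2 _ _ i.isLt (hbd i))
    have h2 : (∏ s ∈ Finset.Iio i, ((b i : ℚ) - b s)) ≠ 0 := by
      apply Finset.prod_ne_zero_iff.mpr
      intro s hs
      have hlt : b s < b i := hb (Finset.mem_Iio.mp hs)
      have : (b s : ℚ) < b i := by exact_mod_cast hlt
      intro h; linarith
    rw [div_self h1, div_self h2, one_mul]
  · intro i j hlt
    rw [key i j (le_of_lt hlt)]
    have hJI : (j : ℕ) < (i : ℕ) := hlt
    have hev : (Ppoly n (i : ℕ) (j : ℕ)).eval ((n : ℚ) + (i : ℕ) + 1) = 0 := by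
      rw [Ppoly_eval]
      apply mul_eq_zero_of_right
      refine Finset.prod_eq_zero
        (Finset.mem_range.mpr (show 0 < (i:ℕ) - (j:ℕ) from by omega)) ?_
      push_cast; ring
    rw [hev]; ring
  · intro i
    rw [key i i le_rfl]
    have hIm : (i : ℕ) < m := i.isLt
    have hev : (Ppoly n (i : ℕ) (i : ℕ)).eval ((n : ℚ) + (i : ℕ) + 1)
        = ∏ t ∈ Finset.range (i : ℕ), (((n : ℚ) + (i : ℕ) + 1) - t) := by
      rw [Ppoly_eval, Nat.sub_self]
      simp only [Finset.range_zero, Finset.prod_empty, mul_one]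
    have hsplit : ∏ k ∈ Finset.range ((i : ℕ) + 1), (((n : ℚ) + (i : ℕ) + 1) - v k)⁻¹
        = (∏ k ∈ Finset.range (i : ℕ), (((n : ℚ) + (i : ℕ) + 1) - v k)⁻¹)
          * (((n : ℚ) + (i : ℕ) + 1) - ((b i : ℕ) : ℚ))⁻¹ := by
      rw [Finset.prod_range_succ, hvk (i : ℕ) hIm]
    have hrhs : (∏ s ∈ Finset.Iio i, (((b i : ℚ) - b s) / ((n : ℚ) + (i : ℕ) + 1 - b s)))
        = (∏ s ∈ Finset.range (i : ℕ), ((b i : ℚ) - v s))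
          * ∏ s ∈ Finset.range (i : ℕ), (((n : ℚ) + (i : ℕ) + 1) - v s)⁻¹ := by
      rw [← Finset.prod_mul_distrib]
      refine prod_fin_nat _ _
        (fun s => by rw [Finset.mem_Iio, Finset.mem_range, Fin.lt_def])
        (fun s hs => lt_trans (Finset.mem_range.mp hs) hIm)
        _ _ (fun s h hs => by rw [hvk s h, div_eq_mul_inv])
    rw [hev, hsplit, hrhs]
    have hd := diag_id n m (i : ℕ) (b i) hIm (hbd i)
    have hbine : ((n : ℚ) + (i : ℕ) + 1) - ((b i : ℕ) : ℚ) ≠ 0 := by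
      have : ((b i : ℕ) : ℚ) < (n : ℚ) + (i : ℕ) + 1 := by
        exact_mod_cast (show b i < n + (i : ℕ) + 1 from by have := hbd i; omega)
      intro h; linarith
    have hinv : (((n : ℚ) + (i : ℕ) + 1) - ((b i : ℕ) : ℚ))⁻¹
        * (((n : ℚ) + (i : ℕ) + 1) - ((b i : ℕ) : ℚ)) = 1 := inv_mul_cancel₀ hbine
    linear_combination ((∏ s ∈ Finset.range (i : ℕ), ((b i : ℚ) - v s)) *
        (∏ s ∈ Finset.range (i : ℕ), (((n : ℚ) + (i : ℕ) + 1) - v s)⁻¹) *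
        (((n : ℚ) + (i : ℕ) + 1) - ((b i : ℕ) : ℚ))⁻¹) * hd +
      (((n + (i : ℕ) + 1).choose (b i) : ℚ) * (∏ s ∈ Finset.range (i : ℕ), ((b i : ℚ) - v s)) *
        (∏ s ∈ Finset.range (i : ℕ), (((n : ℚ) + (i : ℕ) + 1) - v s)⁻¹)) * hinv
end

section
/- Let $n, m \geq 1$ and let $b_1 < \cdots < b_m$ be strictly increasing nonnegative integers with $b_m \leq n+m-1$. Then $\prod_{i=1}^{m}\left[\binom{n+i}{b_i}\prod_{s=1}^{i-1}\frac{b_i-b_s}{n+i-b_s}\right] = \frac{\Delta(0,1,\dots,n+m)}{\Delta(0,1,\dots,n)} \cdot \frac{\Delta(b_1,\dots,b_m)}{\prod_{i=1}^{m} b_i!\,(n+m-b_i)!}$, where $\Delta$ is the Vandermonde product. -/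
open Finset Nat

private lemma fin_prod_Ioi {M : Type*} [CommMonoid M] {m : ℕ} (i : Fin m) (f : ℕ → M) :
    ∏ j ∈ Finset.Ioi i, f (j : ℕ) = ∏ j ∈ Finset.Ico ((i : ℕ) + 1) m, f j := by
  refine Finset.prod_bij' (fun j _ => (j : ℕ)) (fun j hj => ⟨j, (Finset.mem_Ico.mp hj).2⟩)
    (fun a ha => ?_) (fun a ha => ?_) (fun a ha => rfl) (fun a ha => rfl) (fun a ha => rfl)
  · exact Finset.mem_Ico.mpr ⟨Fin.lt_def.mp (Finset.mem_Ioi.mp ha), a.isLt⟩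
  · exact Finset.mem_Ioi.mpr (Fin.lt_def.mpr (Finset.mem_Ico.mp ha).1)

private lemma fin_prod_Iio {M : Type*} [CommMonoid M] {m : ℕ} (i : Fin m) (f : ℕ → M) :
    ∏ j ∈ Finset.Iio i, f (j : ℕ) = ∏ j ∈ Finset.range (i : ℕ), f j := by
  refine Finset.prod_bij' (fun j _ => (j : ℕ))
    (fun j hj => ⟨j, lt_trans (Finset.mem_range.mp hj) i.isLt⟩)
    (fun a ha => ?_) (fun a ha => ?_) (fun a ha => rfl) (fun a ha => rfl) (fun a ha => rfl)
  · exact Finset.mem_range.mpr (Fin.lt_def.mp (Finset.mem_Iio.mp ha))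
  · exact Finset.mem_Iio.mpr (Fin.lt_def.mpr (Finset.mem_range.mp ha))

private lemma prod_Ioi_comm {M : Type*} [CommMonoid M] {m : ℕ} (f : Fin m → Fin m → M) :
    ∏ i : Fin m, ∏ j ∈ Finset.Ioi i, f i j = ∏ j : Fin m, ∏ i ∈ Finset.Iio j, f i j :=
  Finset.prod_comm' (by simp)

private lemma fact_mul_prod (t d : ℕ) :
    t ! * ∏ k ∈ Finset.range d, (t + 1 + k) = (t + d)! := by
  induction d with
  | zero => simp
  | succ d ih =>
    rw [Finset.prod_range_succ, ← mul_assoc, ih, show t + (d+1) = (t+d) + 1 by ring,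
      Nat.factorial_succ]
    ring

private lemma prod_range_sub' (J : ℕ) : ∏ i ∈ Finset.range J, (J - i) = J ! := by
  rw [← Finset.prod_range_add_one_eq_factorial, ← Finset.prod_range_reflect]
  refine Finset.prod_congr rfl fun i hi => ?_
  have := Finset.mem_range.mp hi
  omega

private lemma vandermonde_fact (N : ℕ) :
    ∏ i : Fin (N+1), ∏ j ∈ Finset.Ioi i, (((j : ℕ) : ℚ) - ((i : ℕ) : ℚ))
      = ∏ k ∈ Finset.range (N+1), (k ! : ℚ) := by
  rw [prod_Ioi_comm]
  rw [← Fin.prod_univ_eq_prod_range (fun k => (k ! : ℚ)) (N+1)]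
  refine Finset.prod_congr rfl fun j _ => ?_
  rw [fin_prod_Iio j (fun i => ((j : ℕ) : ℚ) - (i : ℚ))]
  have h1 : ∀ i ∈ Finset.range (j : ℕ), ((j : ℕ) : ℚ) - (i : ℚ) = (((j : ℕ) - i : ℕ) : ℚ) := by
    intro i hi
    have := Finset.mem_range.mp hi
    push_cast [Nat.cast_sub this.le]
    ring
  rw [Finset.prod_congr rfl h1, ← Nat.cast_prod, prod_range_sub' (j : ℕ)]

private lemma strictMono_gap {m : ℕ} {b : Fin m → ℕ} (hb : StrictMono b) :
    ∀ d (i j : Fin m), (j : ℕ) = (i : ℕ) + d → b i + d ≤ b j := by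
  intro d
  induction d with
  | zero =>
    intro i j h
    have : i = j := Fin.ext (by omega)
    subst this
    omega
  | succ d ih =>
    intro i j h
    have hj' : (i : ℕ) + d < m := by have := j.isLt; omega
    have h1 := ih i ⟨(i : ℕ) + d, hj'⟩ rfl
    have h2 : b ⟨(i : ℕ) + d, hj'⟩ < b j := hb (by simp [Fin.lt_def]; omega)
    omega

private lemma b_le_add {n m : ℕ} {b : Fin m → ℕ} (hb : StrictMono b)
    (hbd : ∀ i : Fin m, b i < n + m) (i : Fin m) : b i ≤ n + (i : ℕ) := by
  have hi := i.isLt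
  have hm1 : m - 1 < m := by omega
  have h := strictMono_gap hb (m - 1 - (i : ℕ)) i ⟨m - 1, hm1⟩ (by simp; omega)
  have h2 := hbd ⟨m - 1, hm1⟩
  omega

private lemma per_index (n m : ℕ) (i : Fin m) (c : ℕ) (hc : c ≤ n + (i : ℕ)) :
    (n + (i : ℕ) + 1).choose c * (c ! * (n + m - c)!)
      = (n + (i : ℕ) + 1)! * ∏ j ∈ Finset.Ioi i, (n + (j : ℕ) + 1 - c) := by
  rw [fin_prod_Ioi i (fun j => n + j + 1 - c), Finset.prod_Ico_eq_prod_range]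
  have hsub : ∀ k ∈ Finset.range (m - ((i : ℕ) + 1)),
      n + ((i : ℕ) + 1 + k) + 1 - c = (n + (i : ℕ) + 1 - c) + 1 + k := by
    intro k _; omega
  rw [Finset.prod_congr rfl hsub]
  have h1 : (n + m - c)! = (n + (i : ℕ) + 1 - c)! *
      ∏ k ∈ Finset.range (m - ((i : ℕ) + 1)), ((n + (i : ℕ) + 1 - c) + 1 + k) := by
    rw [fact_mul_prod]
    congr 1
    have := i.isLt
    omega
  rw [h1, ← Nat.choose_mul_factorial_mul_factorial (show c ≤ n + (i : ℕ) + 1 by omega)]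
  ring

/-- Product of the diagonal entries of the LU factor equals the closed-form
partition function: `∏_i C(n+i, b_i) ∏_{s<i} (b_i-b_s)/(n+i-b_s)
= Δ(0,…,n+m)/Δ(0,…,n) * Δ(b)/∏ b_i!(n+m-b_i)!` (stated here 0-based). -/
theorem stmt_13 (n m : ℕ) (hn : 1 ≤ n) (hm : 1 ≤ m) (b : Fin m → ℕ) (hb : StrictMono b)
    (hbd : ∀ i : Fin m, b i < n + m) :
    ∏ i : Fin m, (((n + (i : ℕ) + 1).choose (b i) : ℚ) *
        ∏ s ∈ Finset.Iio i, (((b i : ℚ) - b s) / ((n : ℚ) + (i : ℕ) + 1 - b s))) =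
      (∏ i : Fin (n+m+1), ∏ j ∈ Finset.Ioi i, (((j : ℕ) : ℚ) - ((i : ℕ) : ℚ))) /
      (∏ i : Fin (n+1), ∏ j ∈ Finset.Ioi i, (((j : ℕ) : ℚ) - ((i : ℕ) : ℚ))) *
      ((∏ i : Fin m, ∏ j ∈ Finset.Ioi i, ((b j : ℚ) - b i)) /
       ∏ i : Fin m, ((Nat.factorial (b i) : ℚ) * (Nat.factorial (n + m - b i) : ℚ))) := by
  have hble := b_le_add hb hbd
  set Δ : ℚ := ∏ i : Fin m, ∏ j ∈ Finset.Ioi i, ((b j : ℚ) - b i) with hΔdef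
  set PF : ℚ := ∏ i : Fin m, ((Nat.factorial (b i) : ℚ) * (Nat.factorial (n + m - b i) : ℚ))
    with hPFdef
  have hLHS : ∏ i : Fin m, (((n + (i : ℕ) + 1).choose (b i) : ℚ) *
        ∏ s ∈ Finset.Iio i, (((b i : ℚ) - b s) / ((n : ℚ) + (i : ℕ) + 1 - b s)))
      = ((∏ i : Fin m, ((n + (i : ℕ) + 1).choose (b i) : ℚ)) * Δ) /
        ∏ i : Fin m, ∏ s ∈ Finset.Iio i, ((n : ℚ) + (i : ℕ) + 1 - b s) := by
    rw [show Δ = ∏ i : Fin m, ∏ s ∈ Finset.Iio i, ((b i : ℚ) - b s) from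
      (prod_Ioi_comm (fun i j => ((b j : ℚ) - b i))), ← Finset.prod_mul_distrib,
      ← Finset.prod_div_distrib]
    refine Finset.prod_congr rfl fun i _ => ?_
    rw [Finset.prod_div_distrib, mul_div_assoc]
  have hPB : ∏ i : Fin m, ∏ s ∈ Finset.Iio i, ((n : ℚ) + (i : ℕ) + 1 - b s)
      = ∏ s : Fin m, ∏ i ∈ Finset.Ioi s, ((n : ℚ) + (i : ℕ) + 1 - b s) :=
    (prod_Ioi_comm (fun s i => ((n : ℚ) + (i : ℕ) + 1 - b s))).symm
  have hPBnat : ∏ s : Fin m, ∏ i ∈ Finset.Ioi s, ((n : ℚ) + (i : ℕ) + 1 - b s)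
      = ((∏ s : Fin m, ∏ i ∈ Finset.Ioi s, (n + (i : ℕ) + 1 - b s) : ℕ) : ℚ) := by
    push_cast
    refine Finset.prod_congr rfl fun s _ => Finset.prod_congr rfl fun i hi => ?_
    have hsi : (s : ℕ) < (i : ℕ) := Fin.lt_def.mp (Finset.mem_Ioi.mp hi)
    have hle : b s ≤ n + (i : ℕ) + 1 := by have := hble s; omega
    push_cast [Nat.cast_sub hle]
    ring
  have hsplit : ∏ k ∈ Finset.range (n + m + 1), (k ! : ℚ)
      = (∏ k ∈ Finset.range (n + 1), (k ! : ℚ)) * ∏ k ∈ Finset.range m, ((n + 1 + k)! : ℚ) := by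
    rw [show n + m + 1 = (n + 1) + m by ring, Finset.prod_range_add]
  have hV2 : (∏ k ∈ Finset.range (n + 1), (k ! : ℚ)) ≠ 0 :=
    Finset.prod_ne_zero_iff.mpr fun k _ => Nat.cast_ne_zero.mpr (Nat.factorial_ne_zero k)
  have hkey : (∏ i : Fin m, (n + (i : ℕ) + 1).choose (b i)) *
      ∏ i : Fin m, (Nat.factorial (b i) * Nat.factorial (n + m - b i))
      = (∏ k ∈ Finset.range m, (n + 1 + k)!) *
        ∏ s : Fin m, ∏ i ∈ Finset.Ioi s, (n + (i : ℕ) + 1 - b s) := by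
    rw [← Fin.prod_univ_eq_prod_range (fun k => (n + 1 + k)!) m, ← Finset.prod_mul_distrib,
      ← Finset.prod_mul_distrib]
    refine Finset.prod_congr rfl fun i _ => ?_
    rw [show n + 1 + (i : ℕ) = n + (i : ℕ) + 1 by ring]
    exact per_index n m i (b i) (hble i)
  have hΔne : Δ ≠ 0 := by
    refine Finset.prod_ne_zero_iff.mpr fun i _ => Finset.prod_ne_zero_iff.mpr fun j hj => ?_
    have h1 : b i < b j := hb (Finset.mem_Ioi.mp hj)
    have h2 : (b i : ℚ) < (b j : ℚ) := by exact_mod_cast h1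
    exact sub_ne_zero.mpr (ne_of_gt h2)
  have hPFne : PF ≠ 0 := by
    refine Finset.prod_ne_zero_iff.mpr fun i _ => mul_ne_zero
      (Nat.cast_ne_zero.mpr (Nat.factorial_ne_zero _))
      (Nat.cast_ne_zero.mpr (Nat.factorial_ne_zero _))
  have hPBne : ((∏ s : Fin m, ∏ i ∈ Finset.Ioi s, (n + (i : ℕ) + 1 - b s) : ℕ) : ℚ) ≠ 0 := by
    rw [Nat.cast_ne_zero]
    refine Finset.prod_ne_zero_iff.mpr fun s _ => Finset.prod_ne_zero_iff.mpr fun i hi => ?_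
    have hsi : (s : ℕ) < (i : ℕ) := Fin.lt_def.mp (Finset.mem_Ioi.mp hi)
    have := hble s
    omega
  have hkeyQ : (∏ i : Fin m, ((n + (i : ℕ) + 1).choose (b i) : ℚ)) * PF
      = (∏ k ∈ Finset.range m, ((n + 1 + k)! : ℚ)) *
        ((∏ s : Fin m, ∏ i ∈ Finset.Ioi s, (n + (i : ℕ) + 1 - b s) : ℕ) : ℚ) := by
    have h := congrArg (fun x : ℕ => (x : ℚ)) hkey
    push_cast at h
    push_cast [hPFdef]
    convert h using 2
  rw [hLHS, hPB, hPBnat, vandermonde_fact (n + m), vandermonde_fact n, hsplit,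
    mul_comm (∏ k ∈ Finset.range (n + 1), (k ! : ℚ)) (∏ k ∈ Finset.range m, ((n + 1 + k)! : ℚ)),
    mul_div_assoc (∏ k ∈ Finset.range m, ((n + 1 + k)! : ℚ))
      (∏ k ∈ Finset.range (n + 1), (k ! : ℚ)) (∏ k ∈ Finset.range (n + 1), (k ! : ℚ)),
    div_self hV2, mul_one, ← mul_div_assoc, div_eq_div_iff hPBne hPFne]
  linear_combination Δ * hkeyQ
end

section
/- For the case $p = 2$, i.e. $x(t) = (1 - 2/t)^{1/2}$ for $t > 2$, the parametric curve $X(t) = t - \frac{x(t)(1-x(t))}{x'(t)}$, $Y(t) = \frac{(1-x(t))^2}{x'(t)}$ satisfies the algebraic equation $(2X(t) - Y(t))^2 - 8(X(t) - Y(t)) = 0$ for all $t > 2$. -/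
/-- For `p = 2`, `x(t) = (1 - 2/t)^(1/2)`: the parametric arctic curve
`X(t) = t - x(1-x)/x'`, `Y(t) = (1-x)²/x'` lies on the parabola
`(2X - Y)² = 8(X - Y)` for `t > 2`. -/
theorem stmt_15 :
    let x : ℝ → ℝ := fun t => (1 - 2 / t) ^ ((1 : ℝ)/2)
    let X : ℝ → ℝ := fun t => t - x t * (1 - x t) / deriv x t
    let Y : ℝ → ℝ := fun t => (1 - x t)^2 / deriv x t
    ∀ t : ℝ, 2 < t → (2 * X t - Y t)^2 - 8 * (X t - Y t) = 0 := by
  intro x X Y t ht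
  have ht0 : (0:ℝ) < t := by linarith
  have hu : (0:ℝ) < 1 - 2 / t := by
    rw [sub_pos, div_lt_one ht0]; exact ht
  set u : ℝ := 1 - 2 / t with hu_def
  set s : ℝ := u ^ ((1:ℝ)/2) with hs_def
  have hs0 : 0 < s := Real.rpow_pos_of_pos hu _
  have hs2 : s ^ 2 = u := by
    rw [hs_def, ← Real.rpow_natCast (u ^ ((1:ℝ)/2)) 2, ← Real.rpow_mul hu.le]
    norm_num
  -- derivative of inner function
  have hinner : HasDerivAt (fun t : ℝ => 1 - 2 / t) (2 / t ^ 2) t := by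
    have h1 : HasDerivAt (fun t : ℝ => 2 / t) (-(2 / t ^ 2)) t := by
      have := (hasDerivAt_inv (ne_of_gt ht0)).const_mul (2:ℝ)
      simpa [div_eq_mul_inv, mul_comm] using this
    exact ((hasDerivAt_const t (1:ℝ)).sub h1).congr_deriv (by ring)
  have hx : HasDerivAt x (((1:ℝ)/2) * u ^ ((1:ℝ)/2 - 1) * (2 / t ^ 2)) t := by
    have h2 : HasDerivAt (fun y : ℝ => y ^ ((1:ℝ)/2)) (((1:ℝ)/2) * u ^ ((1:ℝ)/2 - 1)) u := by
      simpa using Real.hasDerivAt_rpow_const (x := u) (p := (1:ℝ)/2) (Or.inl hu.ne')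
    exact h2.comp t hinner
  have hderiv : deriv x t = 1 / (t ^ 2 * s) := by
    rw [hx.deriv]
    have : u ^ ((1:ℝ)/2 - 1) = s / u := by
      rw [hs_def, ← Real.rpow_sub_one hu.ne']
    rw [this]
    field_simp
    linear_combination (hs2.trans hu_def)
  have hxd : x t = s := rfl
  have hd0 : deriv x t ≠ 0 := by
    rw [hderiv]; positivity
  have hts : t ^ 2 * s ≠ 0 := by positivity
  show (2 * (t - x t * (1 - x t) / deriv x t) - (1 - x t)^2 / deriv x t)^2
      - 8 * ((t - x t * (1 - x t) / deriv x t) - (1 - x t)^2 / deriv x t) = 0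
  rw [hxd, hderiv]
  have ht2 : t * s ^ 2 = t - 2 := by
    rw [hs2, hu_def]; field_simp
  field_simp
  linear_combination (-4*t + 4*t^2*s - 2*t^2*s^2 - t^3*s^2 + t^3*s^4) * ht2
end

section
/- For the case $p = 3$, i.e. $x(t) = ((t-3)/t)^{1/3}$ for $t > 3$, the parametric curve $X(t) = t - \frac{x(t)(1-x(t))}{x'(t)}$, $Y(t) = \frac{(1-x(t))^2}{x'(t)}$ satisfies the quartic equation $(3X^2 - 3XY + Y^2)^2 - 2(3X - Y)(9X^2 - 15XY + 7Y^2) + 81(X-Y)^2 = 0$ (with $X = X(t)$, $Y = Y(t)$) for all $t > 3$. -/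
set_option maxHeartbeats 2000000 in
/-- For `p = 3`, `x(t) = ((t-3)/t)^(1/3)`: the parametric arctic curve lies on
the quartic `(3X²-3XY+Y²)² - 2(3X-Y)(9X²-15XY+7Y²) + 81(X-Y)² = 0` for `t > 3`. -/
theorem stmt_16 :
    let x : ℝ → ℝ := fun t => ((t - 3) / t) ^ ((1 : ℝ)/3)
    let X : ℝ → ℝ := fun t => t - x t * (1 - x t) / deriv x t
    let Y : ℝ → ℝ := fun t => (1 - x t)^2 / deriv x t
    ∀ t : ℝ, 3 < t →
      (3 * (X t)^2 - 3 * X t * Y t + (Y t)^2)^2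
        - 2 * (3 * X t - Y t) * (9 * (X t)^2 - 15 * X t * Y t + 7 * (Y t)^2)
        + 81 * (X t - Y t)^2 = 0 := by
  intro x X Y t ht
  have ht0 : (0:ℝ) < t := by linarith
  have ht3 : (0:ℝ) < t - 3 := by linarith
  have hu : (0:ℝ) < (t-3)/t := div_pos ht3 ht0
  set s : ℝ := ((t-3)/t) ^ ((1:ℝ)/3) with hs_def
  have hs0 : 0 < s := Real.rpow_pos_of_pos hu _
  have hs3 : s^3 = (t-3)/t := by
    rw [hs_def, ← Real.rpow_natCast (((t-3)/t) ^ ((1:ℝ)/3)) 3, ← Real.rpow_mul hu.le]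
    norm_num
  have hs3lt : s^3 < 1 := by
    rw [hs3, div_lt_one ht0]; linarith
  have hs1 : s < 1 := by
    by_contra h
    push_neg at h
    nlinarith [pow_le_pow_left₀ (by norm_num : (0:ℝ) ≤ 1) h 3]
  have hf : HasDerivAt (fun t : ℝ => (t-3)/t) (3/t^2) t := by
    have h1 : HasDerivAt (fun t : ℝ => t - 3) 1 t := (hasDerivAt_id t).sub_const 3
    have h2 : HasDerivAt (fun t : ℝ => t) 1 t := hasDerivAt_id t
    have := h1.div h2 (ne_of_gt ht0)
    exact this.congr_deriv (by ring)
  have hx : HasDerivAt x ((3/t^2) * ((1:ℝ)/3) * ((t-3)/t) ^ ((1:ℝ)/3 - 1)) t :=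
    hf.rpow_const (Or.inl (ne_of_gt hu))
  have hderiv : deriv x t = s / (t*(t-3)) := by
    rw [hx.deriv]
    rw [Real.rpow_sub hu, Real.rpow_one, ← hs_def]
    field_simp
  have hXval : X t = t - x t * (1 - x t) / deriv x t := rfl
  have hYval : Y t = (1 - x t)^2 / deriv x t := rfl
  have hxval : x t = s := rfl
  have hderiv_ne : deriv x t ≠ 0 := by
    rw [hderiv]
    positivity
  have h1s3 : (1:ℝ) - s^3 ≠ 0 := by nlinarith
  have ht_eq : t = 3 / (1 - s^3) := by
    rw [hs3]
    field_simp
    ring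
  rw [hXval, hYval, hxval, hderiv, ht_eq]
  have hs0' : s ≠ 0 := ne_of_gt hs0
  field_simp
  ring
end

section
/- Let $\alpha : [0,1] \to \mathbb{R}$ be continuous, piecewise differentiable, increasing with $\alpha(0)=0$, and satisfying the reflection symmetry $\alpha(u) = \alpha(1) - \alpha(1-u)$ for all $u \in [0,1]$. Define $x(t) = \exp\left(-\int_0^1 \frac{du}{t - \alpha(u)}\right)$ for real $t > \alpha(1)$ or $t < 0$, and the arctic curve parametrization $X(t) = t - \frac{x(t)(1-x(t))}{x'(t)}$, $Y(t) = \frac{(1-x(t))^2}{x'(t)}$. Then $x(\alpha(1) - t) = 1/x(t)$, and consequently $X(\alpha(1)-t) = \alpha(1) - X(t) + Y(t)$ and $Y(\alpha(1)-t) = Y(t)$ wherever both sides are defined. -/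
/-- Reflection symmetry of the arctic curve: if `α(u) = α(1) - α(1-u)` then
`x(α(1)-t) = 1/x(t)`, and the parametrization satisfies
`X(α(1)-t) = α(1) - X(t) + Y(t)` and `Y(α(1)-t) = Y(t)`. -/
theorem stmt_17 (α : ℝ → ℝ) (hcont : ContinuousOn α (Set.Icc 0 1))
    (hmono : MonotoneOn α (Set.Icc 0 1)) (h0 : α 0 = 0)
    (hsym : ∀ u ∈ Set.Icc (0:ℝ) 1, α u = α 1 - α (1 - u)) :
    let x : ℝ → ℝ := fun t => Real.exp (-∫ u in (0:ℝ)..1, 1 / (t - α u))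
    let X : ℝ → ℝ := fun t => t - x t * (1 - x t) / deriv x t
    let Y : ℝ → ℝ := fun t => (1 - x t)^2 / deriv x t
    ∀ t : ℝ, (α 1 < t ∨ t < 0) →
      x (α 1 - t) = 1 / x t ∧
      X (α 1 - t) = α 1 - X t + Y t ∧
      Y (α 1 - t) = Y t := by
  intro x X Y t _ht
  have hpos : ∀ s : ℝ, 0 < x s := fun s => Real.exp_pos _
  -- key identity : x (α 1 - s) = (x s)⁻¹ for all s
  have key : ∀ s : ℝ, x (α 1 - s) = (x s)⁻¹ := by
    intro s
    have hI : (∫ u in (0:ℝ)..1, 1 / ((α 1 - s) - α u))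
        = -∫ u in (0:ℝ)..1, 1 / (s - α u) := by
      have h1 : Set.EqOn (fun u => 1 / ((α 1 - s) - α u))
          (fun u => -(1 / (s - α (1 - u)))) (Set.uIcc (0:ℝ) 1) := by
        intro u hu
        rw [Set.uIcc_of_le (by norm_num : (0:ℝ) ≤ 1)] at hu
        have h2 := hsym u hu
        simp only
        rw [h2]
        have h3 : α 1 - s - (α 1 - α (1 - u)) = -(s - α (1 - u)) := by ring
        rw [h3, div_neg]
      rw [intervalIntegral.integral_congr h1, intervalIntegral.integral_neg]
      congr 1
      have h4 := intervalIntegral.integral_comp_sub_left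
        (a := (0:ℝ)) (b := 1) (fun v => 1 / (s - α v)) 1
      simpa using h4
    show Real.exp _ = (Real.exp (-∫ u in (0:ℝ)..1, 1 / (s - α u)))⁻¹
    rw [hI, neg_neg, ← Real.exp_neg, neg_neg]
  -- derivative identity
  have hfun : (fun s => x (α 1 - s)) = fun s => (x s)⁻¹ := funext key
  have hinv : deriv (fun s => (x s)⁻¹) t = -deriv x t / (x t) ^ 2 := by
    by_cases hdiff : DifferentiableAt ℝ x t
    · exact deriv_inv'' hdiff (hpos t).ne'
    · have h1 : ¬ DifferentiableAt ℝ (fun s => (x s)⁻¹) t := by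
        intro h
        apply hdiff
        have h2 : DifferentiableAt ℝ (fun s => ((x s)⁻¹)⁻¹) t :=
          h.inv (inv_ne_zero (hpos t).ne')
        simpa [inv_inv] using h2
      rw [deriv_zero_of_not_differentiableAt h1,
        deriv_zero_of_not_differentiableAt hdiff]
      simp
  have hd : deriv x (α 1 - t) = deriv x t / (x t) ^ 2 := by
    have h2 : deriv (fun s => x (α 1 - s)) t = -deriv x (α 1 - t) :=
      deriv_comp_const_sub x (α 1) t
    rw [hfun, hinv, neg_div] at h2
    linarith
  have ha : x t ≠ 0 := (hpos t).ne'
  refine ⟨by rw [key t, one_div], ?_, ?_⟩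
  · show (α 1 - t) - x (α 1 - t) * (1 - x (α 1 - t)) / deriv x (α 1 - t)
      = α 1 - (t - x t * (1 - x t) / deriv x t) + (1 - x t) ^ 2 / deriv x t
    rw [key t, hd]
    rcases eq_or_ne (deriv x t) 0 with hd0 | hd0
    · simp [hd0]
    · field_simp
      ring
  · show (1 - x (α 1 - t)) ^ 2 / deriv x (α 1 - t)
      = (1 - x t) ^ 2 / deriv x t
    rw [key t, hd]
    rcases eq_or_ne (deriv x t) 0 with hd0 | hd0
    · simp [hd0]
    · field_simp
      ring
end

section
/- For real numbers $a, b, c > 0$ with $a + c$ playing the role of the total width, define $\theta_1 = a$, $\theta_2 = a+b$, $\theta_3 = a+b+c$ and $x(t) = \frac{(t-\theta_1)(t-\theta_3)}{t(t-\theta_2)}$. Then the parametric curve $X(t) = t - \frac{x(t)(1-x(t))}{x'(t)}$, $Y(t) = \frac{(1-x(t))^2}{x'(t)}$ satisfies, for all $t$ where it is defined, the conic equation $\big((c-b)Y - (a+c)X + a(a+b+c)\big)^2 + 4bc\,Y(Y - X) = 0$, i.e. the arctic curve is an ellipse. -/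
set_option maxHeartbeats 1000000

/-- The arctic ellipse for the hexagon: with
`x(t) = (t-θ₁)(t-θ₃)/(t(t-θ₂))`, `θ₁ = a`, `θ₂ = a+b`, `θ₃ = a+b+c`, the
parametric curve `X(t) = t - x(1-x)/x'`, `Y(t) = (1-x)²/x'` satisfies
`((c-b)Y - (a+c)X + a(a+b+c))² + 4bc Y(Y-X) = 0` wherever it is defined. -/
theorem stmt_18 (a b c : ℝ) (ha : 0 < a) (hb : 0 < b) (hc : 0 < c) :
    let x : ℝ → ℝ := fun t => ((t - a) * (t - (a + b + c))) / (t * (t - (a + b)))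
    let X : ℝ → ℝ := fun t => t - x t * (1 - x t) / deriv x t
    let Y : ℝ → ℝ := fun t => (1 - x t)^2 / deriv x t
    ∀ t : ℝ, t ≠ 0 → t ≠ a + b → deriv x t ≠ 0 →
      ((c - b) * Y t - (a + c) * X t + a * (a + b + c))^2
        + 4 * b * c * Y t * (Y t - X t) = 0 := by
  intro x X Y t ht0 htab hd
  have hD : t * (t - (a + b)) ≠ 0 := mul_ne_zero ht0 (sub_ne_zero.mpr htab)
  set n : ℝ := (t - a) * (t - (a + b + c)) with hn
  set d2 : ℝ := t * (t - (a + b)) with hd2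
  set e : ℝ := ((t - (a + b + c)) + (t - a)) * d2 - n * ((t - (a + b)) + t) with he
  have hN : HasDerivAt (fun s : ℝ => (s - a) * (s - (a + b + c)))
      (1 * (t - (a + b + c)) + (t - a) * 1) t :=
    ((hasDerivAt_id t).sub_const a).mul ((hasDerivAt_id t).sub_const (a + b + c))
  have hDd : HasDerivAt (fun s : ℝ => s * (s - (a + b)))
      (1 * (t - (a + b)) + t * 1) t :=
    (hasDerivAt_id t).mul ((hasDerivAt_id t).sub_const (a + b))
  have hxd : HasDerivAt x (e / d2 ^ 2) t := by
    have := hN.div hDd hD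
    refine (this : HasDerivAt x _ t).congr_deriv ?_
    rw [he, hn, hd2]; ring
  have hdx : deriv x t = e / d2 ^ 2 := hxd.deriv
  have he0 : e ≠ 0 := by
    intro h
    exact hd (by rw [hdx, h, zero_div])
  have hxv : x t = n / d2 := rfl
  have hY : Y t = (d2 - n) ^ 2 / e := by
    show (1 - x t) ^ 2 / deriv x t = _
    rw [hxv, hdx]
    field_simp
  have hX : X t = t - n * (d2 - n) / e := by
    show t - x t * (1 - x t) / deriv x t = _
    rw [hxv, hdx]
    field_simp
  rw [hX, hY]
  have key : ((c - b) * ((d2 - n) ^ 2 / e) - (a + c) * (t - n * (d2 - n) / e)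
        + a * (a + b + c)) ^ 2
      + 4 * b * c * ((d2 - n) ^ 2 / e) * ((d2 - n) ^ 2 / e - (t - n * (d2 - n) / e)) = 0 := by
    field_simp
    rw [he, hn, hd2]
    ring
  exact key
end
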